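/- arXiv:2312.00156 — 3 statements merged into one kernel-verified Lean document; each statement's English description precedes it below -/
import Mathlib

section
/- Let H and A be color Hopf algebras with A cocommutative, and p: H → A, i: A → H morphisms with p ∘ i = Id_A. Then the map f: Hker(p) ⋊ A → H, k ⊗ a ↦ k i(a), is an isomorphism of color Hopf algebras, with inverse g: H → Hker(p) ⋊ A given by g(h) = h₁ i(p(S(h₂))) ⊗ p(h₃). -/
open TensorProduct

namespace ColorHopfPaper

variable (k : Type*) [Field k] (G : Type*) [CommGroup G]

/-- The "middle interchange" map `(A⊗A)⊗(B⊗B) → (A⊗B)⊗(A⊗B)` built from a braiding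
`c : A⊗B → B⊗A` applied to the two middle factors. -/
noncomputable def midMap {A B : Type*} [AddCommGroup A] [Module k A]
    [AddCommGroup B] [Module k B] (c : A ⊗[k] B →ₗ[k] B ⊗[k] A) :
    (A ⊗[k] A) ⊗[k] (B ⊗[k] B) →ₗ[k] (A ⊗[k] B) ⊗[k] (A ⊗[k] B) :=
  (TensorProduct.assoc k A B (A ⊗[k] B)).symm.toLinearMap ∘ₗ
    (TensorProduct.map LinearMap.id
      ((TensorProduct.assoc k B A B).toLinearMap ∘ₗ
        (TensorProduct.map c LinearMap.id) ∘ₗ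
        (TensorProduct.assoc k A B B).symm.toLinearMap)) ∘ₗ
    (TensorProduct.assoc k A A (B ⊗[k] B)).toLinearMap


/-- Generic Hopf kernel `{x : x₁ ⊗ f(x₂) = x ⊗ 1}` of `f`, for a comultiplication `Δ`. -/
noncomputable def hkerGen {X B : Type*} [AddCommGroup X] [Module k X]
    [AddCommGroup B] [Module k B]
    (Δ : X →ₗ[k] X ⊗[k] X) (f : X →ₗ[k] B) (oneB : B) : Submodule k X :=
  LinearMap.ker (((TensorProduct.map LinearMap.id f) ∘ₗ Δ) -
    (TensorProduct.mk k X B).flip oneB)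

/-- A (cocommutative) color Hopf algebra: a cocommutative Hopf monoid in the symmetric
monoidal category of `G`-graded `k`-vector spaces, with braiding given by a
skew-symmetric bicharacter `φ`. -/
structure ColorHopfAlg (H : Type*) [AddCommGroup H] [Module k H] where
  φ : G → G → k
  φ_ne : ∀ g h : G, φ g h ≠ 0
  φ_mul_left : ∀ g h l : G, φ (g * h) l = φ g l * φ h l
  φ_mul_right : ∀ g h l : G, φ g (h * l) = φ g h * φ g l
  φ_skew : ∀ g h : G, φ g h * φ h g = 1
  grade : G → Submodule k H
  grade_top : ⨆ g : G, grade g = ⊤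
  mul : H ⊗[k] H →ₗ[k] H
  one : H
  comul : H →ₗ[k] H ⊗[k] H
  counit : H →ₗ[k] k
  antipode : H →ₗ[k] H
  braid : H ⊗[k] H →ₗ[k] H ⊗[k] H
  braid_apply : ∀ (g h : G) (x y : H), x ∈ grade g → y ∈ grade h →
    braid (x ⊗ₜ[k] y) = φ g h • (y ⊗ₜ[k] x)
  one_mem : one ∈ grade 1
  mul_mem : ∀ (g h : G) (x y : H), x ∈ grade g → y ∈ grade h →
    mul (x ⊗ₜ[k] y) ∈ grade (g * h)
  antipode_mem : ∀ (g : G) (x : H), x ∈ grade g → antipode x ∈ grade g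
  mul_assoc' : ∀ x y z : H,
    mul (mul (x ⊗ₜ[k] y) ⊗ₜ[k] z) = mul (x ⊗ₜ[k] mul (y ⊗ₜ[k] z))
  one_mul' : ∀ x : H, mul (one ⊗ₜ[k] x) = x
  mul_one' : ∀ x : H, mul (x ⊗ₜ[k] one) = x
  coassoc : (TensorProduct.assoc k H H H).toLinearMap ∘ₗ
      (TensorProduct.map comul LinearMap.id) ∘ₗ comul
      = (TensorProduct.map LinearMap.id comul) ∘ₗ comul
  counit_left : ∀ x : H,
    (TensorProduct.lid k H) ((TensorProduct.map counit LinearMap.id) (comul x)) = x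
  counit_right : ∀ x : H,
    (TensorProduct.rid k H) ((TensorProduct.map LinearMap.id counit) (comul x)) = x
  comul_one : comul one = one ⊗ₜ[k] one
  counit_one : counit one = 1
  counit_mul : ∀ x y : H, counit (mul (x ⊗ₜ[k] y)) = counit x * counit y
  comul_mul : comul ∘ₗ mul =
    (TensorProduct.map mul mul) ∘ₗ midMap k braid ∘ₗ (TensorProduct.map comul comul)
  cocomm : braid ∘ₗ comul = comul
  antipode_left : ∀ x : H,
    mul ((TensorProduct.map antipode LinearMap.id) (comul x)) = counit x • one
  antipode_right : ∀ x : H,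
    mul ((TensorProduct.map LinearMap.id antipode) (comul x)) = counit x • one

namespace ColorHopfAlg

variable {k G}
variable {H : Type*} [AddCommGroup H] [Module k H] (C : ColorHopfAlg k G H)

/-- An element is homogeneous if it lies in one of the graded components. -/
def homogeneous (x : H) : Prop := ∃ g : G, x ∈ C.grade g

/-- The (color) adjoint action `ξ(a ⊗ b) = φ(|a₂|,|b|) a₁ b S(a₂)`. -/
noncomputable def adj : H ⊗[k] H →ₗ[k] H :=
  C.mul ∘ₗ
    (TensorProduct.map LinearMap.id
      (C.mul ∘ₗ (TensorProduct.map LinearMap.id C.antipode) ∘ₗ C.braid)) ∘ₗ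
    (TensorProduct.assoc k H H H).toLinearMap ∘ₗ
    (TensorProduct.map C.comul LinearMap.id)

/-- The commutator `[x,y] = φ(|x₂|,|y₁|) x₁y₁S(x₂)S(y₂) = (x ▷ y₁) S(y₂)`. -/
noncomputable def commMap : H ⊗[k] H →ₗ[k] H :=
  C.mul ∘ₗ (TensorProduct.map C.adj C.antipode) ∘ₗ
    (TensorProduct.assoc k H H H).symm.toLinearMap ∘ₗ
    (TensorProduct.map LinearMap.id C.comul)

/-- The comultiplication of the tensor-product (product) coalgebra `H ⊗ H`:
`x ⊗ y ↦ φ(|x₂|,|y₁|) (x₁⊗y₁)⊗(x₂⊗y₂)`. -/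
noncomputable def comul2 : H ⊗[k] H →ₗ[k] (H ⊗[k] H) ⊗[k] (H ⊗[k] H) :=
  midMap k C.braid ∘ₗ TensorProduct.map C.comul C.comul

/-- The counit of the tensor-product coalgebra `H ⊗ H`. -/
noncomputable def counit2 : H ⊗[k] H →ₗ[k] k :=
  (TensorProduct.lid k k).toLinearMap ∘ₗ TensorProduct.map C.counit C.counit

/-- `V` is a (graded) color Hopf subalgebra of `H`. -/
structure IsCHSub (V : Submodule k H) : Prop where
  one_mem : C.one ∈ V
  mul_mem : ∀ x ∈ V, ∀ y ∈ V, C.mul (x ⊗ₜ[k] y) ∈ V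
  comul_mem : ∀ x ∈ V,
    C.comul x ∈ LinearMap.range (TensorProduct.map V.subtype V.subtype)
  antipode_mem : ∀ x ∈ V, C.antipode x ∈ V
  graded : ∀ x ∈ V, x ∈ Submodule.span k {y : H | y ∈ V ∧ ∃ g : G, y ∈ C.grade g}

/-- `V` is normal: closed under the adjoint action of all of `H`. -/
def IsNormal (V : Submodule k H) : Prop :=
  ∀ a : H, ∀ x ∈ V, C.adj (a ⊗ₜ[k] x) ∈ V

/-- The subalgebra (as a submodule) generated by a set. -/
def genFrom (Sgen : Set H) : Submodule k H :=
  sInf {V : Submodule k H |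
    Sgen ⊆ ↑V ∧ C.one ∈ V ∧ ∀ x ∈ V, ∀ y ∈ V, C.mul (x ⊗ₜ[k] y) ∈ V}

/-- The commutator subalgebra `[X,Y]`, generated by all `[x,y]` with `x ∈ V`, `y ∈ W`. -/
def commSub (V W : Submodule k H) : Submodule k H :=
  C.genFrom {z : H | ∃ x ∈ V, ∃ y ∈ W, z = C.commMap (x ⊗ₜ[k] y)}

/-- The graded subspace `VW` spanned by products `vw`. -/
def prodSpan (V W : Submodule k H) : Submodule k H :=
  Submodule.span k {z : H | ∃ x ∈ V, ∃ y ∈ W, z = C.mul (x ⊗ₜ[k] y)}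

/-- The Hopf kernel `Hker(f) = {x : x₁ ⊗ f(x₂) = x ⊗ 1}` of a map `f : H → B`. -/
noncomputable def hkerOf {B : Type*} [AddCommGroup B] [Module k B]
    (CB : ColorHopfAlg k G B) (f : H →ₗ[k] B) : Submodule k H :=
  LinearMap.ker
    (((TensorProduct.map LinearMap.id f) ∘ₗ C.comul) -
      (TensorProduct.mk k H B).flip CB.one)

end ColorHopfAlg

/-- A morphism of color Hopf algebras. -/
structure IsColorHom {A B : Type*} [AddCommGroup A] [Module k A]
    [AddCommGroup B] [Module k B]
    (CA : ColorHopfAlg k G A) (CB : ColorHopfAlg k G B) (f : A →ₗ[k] B) : Prop where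
  map_mul : ∀ x y : A, f (CA.mul (x ⊗ₜ[k] y)) = CB.mul (f x ⊗ₜ[k] f y)
  map_one : f CA.one = CB.one
  map_comul : CB.comul ∘ₗ f = (TensorProduct.map f f) ∘ₗ CA.comul
  map_counit : CB.counit ∘ₗ f = CA.counit
  map_grade : ∀ g : G, ∀ x ∈ CA.grade g, f x ∈ CB.grade g

/-- A color Hopf crossed module `(A, H, d)`. -/
structure ColorCrossedMod {A H : Type*} [AddCommGroup A] [Module k A]
    [AddCommGroup H] [Module k H]
    (CA : ColorHopfAlg k G A) (CH : ColorHopfAlg k G H) where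
  cAH : A ⊗[k] H →ₗ[k] H ⊗[k] A
  cHA : H ⊗[k] A →ₗ[k] A ⊗[k] H
  cAH_apply : ∀ (g h : G) (a : A) (x : H), a ∈ CA.grade g → x ∈ CH.grade h →
    cAH (a ⊗ₜ[k] x) = CA.φ g h • (x ⊗ₜ[k] a)
  cHA_apply : ∀ (g h : G) (x : H) (a : A), x ∈ CH.grade g → a ∈ CA.grade h →
    cHA (x ⊗ₜ[k] a) = CH.φ g h • (a ⊗ₜ[k] x)
  φ_eq : CH.φ = CA.φ
  act : A ⊗[k] H →ₗ[k] H
  act_one_left : ∀ x : H, act (CA.one ⊗ₜ[k] x) = x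
  act_act : ∀ (a b : A) (x : H),
    act (a ⊗ₜ[k] act (b ⊗ₜ[k] x)) = act (CA.mul (a ⊗ₜ[k] b) ⊗ₜ[k] x)
  act_one : ∀ a : A, act (a ⊗ₜ[k] CH.one) = CA.counit a • CH.one
  counit_act : ∀ (a : A) (x : H),
    CH.counit (act (a ⊗ₜ[k] x)) = CA.counit a * CH.counit x
  comul_act : CH.comul ∘ₗ act =
    (TensorProduct.map act act) ∘ₗ midMap k cAH ∘ₗ
      (TensorProduct.map CA.comul CH.comul)
  act_mul : act ∘ₗ (TensorProduct.map LinearMap.id CH.mul) =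
    CH.mul ∘ₗ (TensorProduct.map act act) ∘ₗ midMap k cAH ∘ₗ
      (TensorProduct.map CA.comul LinearMap.id)
  act_grade : ∀ (g h : G) (a : A) (x : H), a ∈ CA.grade g → x ∈ CH.grade h →
    act (a ⊗ₜ[k] x) ∈ CH.grade (g * h)
  d : H →ₗ[k] A
  d_hom : IsColorHom k G CH CA d
  peiffer₁ : d ∘ₗ act = CA.adj ∘ₗ (TensorProduct.map LinearMap.id d)
  peiffer₂ : act ∘ₗ (TensorProduct.map d LinearMap.id) = CH.adj

namespace ColorCrossedMod

variable {k G}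
variable {A H : Type*} [AddCommGroup A] [Module k A] [AddCommGroup H] [Module k H]
variable {CA : ColorHopfAlg k G A} {CH : ColorHopfAlg k G H}

/-- The multiplication of the semi-direct (smash) product `H ⋊ A`:
`(h⊗a)(h'⊗a') = φ(|a₂|,|h'|) h (a₁·h') ⊗ a₂a'`. -/
noncomputable def smashMul (M : ColorCrossedMod k G CA CH) : (H ⊗[k] A) ⊗[k] (H ⊗[k] A) →ₗ[k] H ⊗[k] A :=
  (TensorProduct.map CH.mul CA.mul) ∘ₗ
  (TensorProduct.assoc k (H ⊗[k] H) A A).toLinearMap ∘ₗ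
  (TensorProduct.map (TensorProduct.assoc k H H A).symm.toLinearMap LinearMap.id) ∘ₗ
  (TensorProduct.map
    (TensorProduct.map LinearMap.id (TensorProduct.map M.act LinearMap.id))
    LinearMap.id) ∘ₗ
  (TensorProduct.map
    ((TensorProduct.map LinearMap.id
        ((TensorProduct.assoc k A H A).symm.toLinearMap ∘ₗ
          (TensorProduct.map LinearMap.id M.cAH) ∘ₗ
          (TensorProduct.assoc k A A H).toLinearMap)) ∘ₗ
      (TensorProduct.assoc k H (A ⊗[k] A) H).toLinearMap)
    LinearMap.id) ∘ₗ
  (TensorProduct.assoc k (H ⊗[k] (A ⊗[k] A)) H A).symm.toLinearMap ∘ₗ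
  (TensorProduct.map (TensorProduct.map LinearMap.id CA.comul) LinearMap.id)

/-- The comultiplication of `H ⋊ A` (tensor-product coalgebra twisted by `φ`). -/
noncomputable def smashComul (M : ColorCrossedMod k G CA CH) : H ⊗[k] A →ₗ[k] (H ⊗[k] A) ⊗[k] (H ⊗[k] A) :=
  midMap k M.cHA ∘ₗ TensorProduct.map CH.comul CA.comul

/-- The counit of `H ⋊ A`. -/
noncomputable def smashCounit (_M : ColorCrossedMod k G CA CH) : H ⊗[k] A →ₗ[k] k :=
  (TensorProduct.lid k k).toLinearMap ∘ₗ TensorProduct.map CH.counit CA.counit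

end ColorCrossedMod


section Statements

variable {A HH : Type*} [AddCommGroup A] [Module k A] [AddCommGroup HH] [Module k HH]

section AuxInfra

variable {k G}

variable {M N P Q : Type*} [AddCommGroup M] [Module k M] [AddCommGroup N] [Module k N]
  [AddCommGroup P] [Module k P] [AddCommGroup Q] [Module k Q]

private lemma ext_on_span₂ {SM : Set M} {SN : Set N}
    (hM : Submodule.span k SM = ⊤) (hN : Submodule.span k SN = ⊤)
    {f g : M ⊗[k] N →ₗ[k] P}
    (h : ∀ x ∈ SM, ∀ y ∈ SN, f (x ⊗ₜ y) = g (x ⊗ₜ y)) : f = g := by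
  have key : ∀ x ∈ SM, ∀ y : N, f (x ⊗ₜ y) = g (x ⊗ₜ y) := by
    intro x hxS y
    have hy : y ∈ Submodule.span k SN := hN ▸ Submodule.mem_top
    induction hy using Submodule.span_induction with
    | mem y hyS => exact h x hxS y hyS
    | zero => simp
    | add a b _ _ ha hb => simp only [tmul_add, map_add, ha, hb]
    | smul r a _ ha => simp only [tmul_smul, map_smul, ha]
  apply TensorProduct.ext'
  intro x y
  have hx : x ∈ Submodule.span k SM := hM ▸ Submodule.mem_top
  induction hx using Submodule.span_induction with
  | mem x hxS => exact key x hxS y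
  | zero => rw [zero_tmul, map_zero, map_zero]
  | add a b _ _ ha hb => simp only [add_tmul, map_add, ha, hb]
  | smul r a _ ha => rw [← smul_tmul', map_smul, map_smul, ha]

private lemma span_tmul_top {SM : Set M} {SN : Set N}
    (hM : Submodule.span k SM = ⊤) (hN : Submodule.span k SN = ⊤) :
    Submodule.span k {t : M ⊗[k] N | ∃ x ∈ SM, ∃ y ∈ SN, t = x ⊗ₜ[k] y} = ⊤ := by
  rw [eq_top_iff, ← TensorProduct.span_tmul_eq_top k M N, Submodule.span_le]
  rintro t ⟨m, n, rfl⟩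
  set S := {t : M ⊗[k] N | ∃ x ∈ SM, ∃ y ∈ SN, t = x ⊗ₜ[k] y}
  have key : ∀ x ∈ SM, ∀ y : N, x ⊗ₜ[k] y ∈ Submodule.span k S := by
    intro x hxS y
    have hy : y ∈ Submodule.span k SN := hN ▸ Submodule.mem_top
    induction hy using Submodule.span_induction with
    | mem y hyS => exact Submodule.subset_span ⟨x, hxS, y, hyS, rfl⟩
    | zero => rw [tmul_zero]; exact Submodule.zero_mem _
    | add a b _ _ ha hb => rw [tmul_add]; exact Submodule.add_mem _ ha hb
    | smul r a _ ha => rw [tmul_smul]; exact Submodule.smul_mem _ _ ha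
  have hx : m ∈ Submodule.span k SM := hM ▸ Submodule.mem_top
  induction hx using Submodule.span_induction with
  | mem x hxS => exact key x hxS n
  | zero => rw [zero_tmul]; exact Submodule.zero_mem _
  | add a b _ _ ha hb => rw [add_tmul]; exact Submodule.add_mem _ ha hb
  | smul r a _ ha => rw [← smul_tmul']; exact Submodule.smul_mem _ _ ha

end AuxInfra
section AuxHopf

variable {k G}
variable {H : Type*} [AddCommGroup H] [Module k H]

open TensorProduct

-- basic map plumbing
private lemma map_split_l {M N P Q R' : Type*} [AddCommGroup M] [Module k M]
    [AddCommGroup N] [Module k N] [AddCommGroup P] [Module k P]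
    [AddCommGroup Q] [Module k Q] [AddCommGroup R'] [Module k R']
    (f₂ : N →ₗ[k] P) (f₁ : M →ₗ[k] N) (g : Q →ₗ[k] R') :
    map (f₂ ∘ₗ f₁) g = map f₂ g ∘ₗ map f₁ LinearMap.id := by
  apply TensorProduct.ext'; intro x y; simp

private lemma map_split_r {M N P Q R' : Type*} [AddCommGroup M] [Module k M]
    [AddCommGroup N] [Module k N] [AddCommGroup P] [Module k P]
    [AddCommGroup Q] [Module k Q] [AddCommGroup R'] [Module k R']
    (f : M →ₗ[k] N) (g₂ : P →ₗ[k] Q) (g₁ : R' →ₗ[k] P) :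
    map f (g₂ ∘ₗ g₁) = map f g₂ ∘ₗ map LinearMap.id g₁ := by
  apply TensorProduct.ext'; intro x y; simp

private lemma map_split_l' {M N P Q R' : Type*} [AddCommGroup M] [Module k M]
    [AddCommGroup N] [Module k N] [AddCommGroup P] [Module k P]
    [AddCommGroup Q] [Module k Q] [AddCommGroup R'] [Module k R']
    (f₂ : N →ₗ[k] P) (f₁ : M →ₗ[k] N) (g : Q →ₗ[k] R') :
    map (f₂ ∘ₗ f₁) g = map f₂ LinearMap.id ∘ₗ map f₁ g := by
  apply TensorProduct.ext'; intro x y; simp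

private lemma map_split_r' {M N P Q R' : Type*} [AddCommGroup M] [Module k M]
    [AddCommGroup N] [Module k N] [AddCommGroup P] [Module k P]
    [AddCommGroup Q] [Module k Q] [AddCommGroup R'] [Module k R']
    (f : M →ₗ[k] N) (g₂ : P →ₗ[k] Q) (g₁ : R' →ₗ[k] P) :
    map f (g₂ ∘ₗ g₁) = map LinearMap.id g₂ ∘ₗ map f g₁ := by
  apply TensorProduct.ext'; intro x y; simp

private lemma map_split_lr {M N P Q : Type*} [AddCommGroup M] [Module k M]
    [AddCommGroup N] [Module k N] [AddCommGroup P] [Module k P]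
    [AddCommGroup Q] [Module k Q] (f : M →ₗ[k] N) (g : P →ₗ[k] Q) :
    map f g = map LinearMap.id g ∘ₗ map f LinearMap.id := by
  apply TensorProduct.ext'; intro x y; simp

private lemma map_split_lr' {M N P Q : Type*} [AddCommGroup M] [Module k M]
    [AddCommGroup N] [Module k N] [AddCommGroup P] [Module k P]
    [AddCommGroup Q] [Module k Q] (f : M →ₗ[k] N) (g : P →ₗ[k] Q) :
    map f g = map f LinearMap.id ∘ₗ map LinearMap.id g := by
  apply TensorProduct.ext'; intro x y; simp

namespace ColorHopfAlg

variable (C : ColorHopfAlg k G H)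

private lemma hom_span_top : Submodule.span k {x : H | ∃ γ, x ∈ C.grade γ} = ⊤ := by
  rw [eq_top_iff, ← C.grade_top]
  exact iSup_le fun γ => fun x hx => Submodule.subset_span ⟨γ, hx⟩

private lemma φ_one_right (g : G) : C.φ g 1 = 1 := by
  have h := C.φ_mul_right g 1 1
  rw [mul_one] at h
  exact (mul_left_cancel₀ (C.φ_ne g 1) (by rw [← h, mul_one])).symm

private lemma φ_one_left (g : G) : C.φ 1 g = 1 := by
  have h := C.φ_mul_left 1 1 g
  rw [mul_one] at h
  exact (mul_left_cancel₀ (C.φ_ne 1 g) (by rw [← h, mul_one])).symm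

private lemma braid_one_left (t : H) : C.braid (C.one ⊗ₜ[k] t) = t ⊗ₜ[k] C.one := by
  have ht : t ∈ Submodule.span k {x : H | ∃ γ, x ∈ C.grade γ} :=
    (C.hom_span_top) ▸ Submodule.mem_top
  induction ht using Submodule.span_induction with
  | mem x hx => obtain ⟨γ, hγ⟩ := hx
                rw [C.braid_apply 1 γ _ _ C.one_mem hγ, C.φ_one_left, one_smul]
  | zero => simp
  | add a b _ _ ha hb => rw [tmul_add, map_add, ha, hb, add_tmul]
  | smul r a _ ha => rw [tmul_smul, map_smul, ha, smul_tmul']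

private lemma braid_one_right (t : H) : C.braid (t ⊗ₜ[k] C.one) = C.one ⊗ₜ[k] t := by
  have ht : t ∈ Submodule.span k {x : H | ∃ γ, x ∈ C.grade γ} :=
    (C.hom_span_top) ▸ Submodule.mem_top
  induction ht using Submodule.span_induction with
  | mem x hx => obtain ⟨γ, hγ⟩ := hx
                rw [C.braid_apply γ 1 _ _ hγ C.one_mem, C.φ_one_right, one_smul]
  | zero => simp
  | add a b _ _ ha hb => rw [add_tmul, map_add, ha, hb, tmul_add]
  | smul r a _ ha => rw [← smul_tmul', map_smul, ha, tmul_smul]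

/-- naturality of the braiding w.r.t. grade-preserving maps -/
private lemma braid_natural (f g : H →ₗ[k] H)
    (hf : ∀ γ x, x ∈ C.grade γ → f x ∈ C.grade γ)
    (hg : ∀ γ x, x ∈ C.grade γ → g x ∈ C.grade γ) :
    C.braid ∘ₗ map f g = map g f ∘ₗ C.braid := by
  apply ext_on_span₂ (C.hom_span_top) (C.hom_span_top)
  rintro x ⟨γ₁, h₁⟩ y ⟨γ₂, h₂⟩
  simp only [LinearMap.comp_apply, map_tmul]
  rw [C.braid_apply γ₁ γ₂ _ _ (hf _ _ h₁) (hg _ _ h₂),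
      C.braid_apply γ₁ γ₂ _ _ h₁ h₂, map_smul, map_tmul]

private lemma counit_left_map :
    (TensorProduct.lid k H).toLinearMap ∘ₗ map C.counit LinearMap.id ∘ₗ C.comul
      = LinearMap.id := by
  apply LinearMap.ext; intro x; exact C.counit_left x

private lemma counit_right_map :
    (TensorProduct.rid k H).toLinearMap ∘ₗ map LinearMap.id C.counit ∘ₗ C.comul
      = LinearMap.id := by
  apply LinearMap.ext; intro x; exact C.counit_right x

private lemma antipode_left_map :
    C.mul ∘ₗ map C.antipode LinearMap.id ∘ₗ C.comul = C.counit.smulRight C.one := by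
  apply LinearMap.ext; intro x; exact C.antipode_left x

private lemma antipode_right_map :
    C.mul ∘ₗ map LinearMap.id C.antipode ∘ₗ C.comul = C.counit.smulRight C.one := by
  apply LinearMap.ext; intro x; exact C.antipode_right x

private lemma mul_assoc_map :
    C.mul ∘ₗ map C.mul LinearMap.id
      = C.mul ∘ₗ map LinearMap.id C.mul ∘ₗ (TensorProduct.assoc k H H H).toLinearMap := by
  apply TensorProduct.ext_threefold; intro x y z
  simpa using C.mul_assoc' x y z

private lemma antipode_one : C.antipode C.one = C.one := by
  have h := C.antipode_left C.one
  rw [C.comul_one, map_tmul, C.counit_one, one_smul] at h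
  simpa [C.mul_one'] using h

end ColorHopfAlg

end AuxHopf
section AuxMid

variable {k G}

open TensorProduct

private lemma midMap_tmul_of {A B : Type*} [AddCommGroup A] [Module k A]
    [AddCommGroup B] [Module k B] (c : A ⊗[k] B →ₗ[k] B ⊗[k] A)
    {y : A} {u : B} {s : k} (h : c (y ⊗ₜ[k] u) = s • (u ⊗ₜ[k] y)) (x : A) (v : B) :
    midMap k c ((x ⊗ₜ[k] y) ⊗ₜ[k] (u ⊗ₜ[k] v))
      = s • ((x ⊗ₜ[k] u) ⊗ₜ[k] (y ⊗ₜ[k] v)) := by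
  simp only [midMap, LinearMap.comp_apply, LinearEquiv.coe_coe, assoc_tmul, map_tmul,
    LinearMap.id_coe, id_eq, assoc_symm_tmul, h, map_smul, smul_tmul, tmul_smul]

/-- `midMap` applied to a tensor whose second pair is general. -/
private lemma midMap_tmul_gen {A B : Type*} [AddCommGroup A] [Module k A]
    [AddCommGroup B] [Module k B] (c : A ⊗[k] B →ₗ[k] B ⊗[k] A)
    (x y : A) (t : B ⊗[k] B) :
    midMap k c ((x ⊗ₜ[k] y) ⊗ₜ[k] t)
      = (TensorProduct.assoc k A B (A ⊗[k] B)).symm (x ⊗ₜ[k]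
          ((TensorProduct.assoc k B A B)
            ((map c LinearMap.id) ((TensorProduct.assoc k A B B).symm (y ⊗ₜ[k] t))))) := by
  simp only [midMap, LinearMap.comp_apply, LinearEquiv.coe_coe, assoc_tmul, map_tmul,
    LinearMap.id_coe, id_eq]

namespace ColorHopfAlg

variable {H : Type*} [AddCommGroup H] [Module k H] (C : ColorHopfAlg k G H)

private noncomputable def m2 : (H ⊗[k] H) ⊗[k] (H ⊗[k] H) →ₗ[k] H ⊗[k] H :=
  map C.mul C.mul ∘ₗ midMap k C.braid

private lemma m2_tmul {gy gu : G} {y u : H} (hy : y ∈ C.grade gy) (hu : u ∈ C.grade gu)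
    (x v : H) :
    C.m2 ((x ⊗ₜ[k] y) ⊗ₜ[k] (u ⊗ₜ[k] v))
      = C.φ gy gu • (C.mul (x ⊗ₜ[k] u) ⊗ₜ[k] C.mul (y ⊗ₜ[k] v)) := by
  unfold m2
  rw [LinearMap.comp_apply,
    midMap_tmul_of C.braid (C.braid_apply gy gu y u hy hu) x v, map_smul, map_tmul]

private lemma m2_one_left (t : H ⊗[k] H) : C.m2 ((C.one ⊗ₜ[k] C.one) ⊗ₜ[k] t) = t := by
  induction t using TensorProduct.induction_on with
  | zero => simp
  | tmul u v =>
      unfold m2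
      rw [LinearMap.comp_apply,
        midMap_tmul_of C.braid (s := (1:k)) (by rw [C.braid_one_left, one_smul]) C.one v,
        one_smul, map_tmul, C.one_mul', C.one_mul']
  | add a b ha hb => rw [tmul_add, map_add, ha, hb]

private lemma m2_one_right (t : H ⊗[k] H) : C.m2 (t ⊗ₜ[k] (C.one ⊗ₜ[k] C.one)) = t := by
  induction t using TensorProduct.induction_on with
  | zero => simp
  | tmul u v =>
      unfold m2
      rw [LinearMap.comp_apply,
        midMap_tmul_of C.braid (s := (1:k)) (by rw [C.braid_one_right, one_smul]) u C.one,
        one_smul, map_tmul, C.mul_one', C.mul_one']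
  | add a b ha hb => rw [add_tmul, map_add, ha, hb]

private lemma m2_assoc :
    C.m2 ∘ₗ map C.m2 LinearMap.id
      = C.m2 ∘ₗ map LinearMap.id C.m2
          ∘ₗ (TensorProduct.assoc k (H ⊗[k] H) (H ⊗[k] H) (H ⊗[k] H)).toLinearMap := by
  have hsp : Submodule.span k {t : H ⊗[k] H |
      ∃ x ∈ {x : H | ∃ γ, x ∈ C.grade γ}, ∃ y ∈ {x : H | ∃ γ, x ∈ C.grade γ},
        t = x ⊗ₜ[k] y} = ⊤ :=
    span_tmul_top C.hom_span_top C.hom_span_top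
  apply ext_on_span₂ (span_tmul_top hsp hsp) hsp
  rintro s ⟨s₁, ⟨x, ⟨gx, hx⟩, y, ⟨gy, hy⟩, rfl⟩, s₂, ⟨z, ⟨gz, hz⟩, w, ⟨gw, hw⟩, rfl⟩, rfl⟩
    r ⟨u, ⟨gu, hu⟩, v, ⟨gv, hv⟩, rfl⟩
  simp only [LinearMap.comp_apply, map_tmul, LinearMap.id_coe, id_eq, LinearEquiv.coe_coe,
    assoc_tmul]
  rw [C.m2_tmul hy hz, ← smul_tmul', map_smul,
    C.m2_tmul (C.mul_mem gy gw y w hy hw) hu,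
    C.m2_tmul hw hu, tmul_smul, map_smul, C.m2_tmul hy (C.mul_mem gz gu z u hz hu),
    smul_smul, smul_smul, C.mul_assoc' x z u, C.mul_assoc' y w v]
  congr 1
  rw [C.φ_mul_left, C.φ_mul_right]
  ring

private lemma comul_mul_m2 : C.comul ∘ₗ C.mul = C.m2 ∘ₗ map C.comul C.comul := by
  rw [C.comul_mul]; rfl


private noncomputable def Jmap : H ⊗[k] (H ⊗[k] H) →ₗ[k] H ⊗[k] (H ⊗[k] H) :=
  (TensorProduct.assoc k H H H).toLinearMap ∘ₗ map C.braid LinearMap.id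
    ∘ₗ (TensorProduct.assoc k H H H).symm.toLinearMap

private lemma midMap_braid_symm_apply (t : H ⊗[k] (H ⊗[k] (H ⊗[k] H))) :
    midMap k C.braid ((TensorProduct.assoc k H H (H ⊗[k] H)).symm t)
      = (TensorProduct.assoc k H H (H ⊗[k] H)).symm
          ((map LinearMap.id (C.Jmap)) t) := by
  simp only [midMap, Jmap, LinearMap.comp_apply, LinearEquiv.coe_coe,
    LinearEquiv.apply_symm_apply]

/-- `J ∘ T = T` : cocommutativity absorbed in the middle of the 3-fold comultiplication. -/
private lemma JT :
    C.Jmap ∘ₗ (map LinearMap.id C.comul ∘ₗ C.comul) = map LinearMap.id C.comul ∘ₗ C.comul := by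
  apply LinearMap.ext; intro x
  have hco := LinearMap.congr_fun C.coassoc x
  simp only [LinearMap.comp_apply, LinearEquiv.coe_coe, Jmap] at hco ⊢
  rw [← hco, (TensorProduct.assoc k H H H).symm_apply_apply]
  congr 1
  rw [← LinearMap.comp_apply (map C.braid LinearMap.id), ← map_split_l, C.cocomm]

/-- `(Δ ⊗ Δ) ∘ Δ` regrouped through the associator. -/
private lemma C1 :
    map C.comul C.comul ∘ₗ C.comul
      = (TensorProduct.assoc k H H (H ⊗[k] H)).symm.toLinearMap
          ∘ₗ map LinearMap.id (map LinearMap.id C.comul ∘ₗ C.comul) ∘ₗ C.comul := by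
  apply LinearMap.ext; intro x
  have hco := LinearMap.congr_fun C.coassoc x
  simp only [LinearMap.comp_apply, LinearEquiv.coe_coe] at hco ⊢
  have h1 := LinearMap.congr_fun (map_split_lr C.comul C.comul) (C.comul x)
  simp only [LinearMap.comp_apply] at h1
  have h2 : (map C.comul LinearMap.id) (C.comul x)
      = (TensorProduct.assoc k H H H).symm ((map LinearMap.id C.comul) (C.comul x)) := by
    rw [← hco, LinearEquiv.symm_apply_apply]
  rw [h1, h2]
  rw [show (map LinearMap.id C.comul :
        (H ⊗[k] H) ⊗[k] H →ₗ[k] (H ⊗[k] H) ⊗[k] (H ⊗[k] H))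
      = map (map LinearMap.id LinearMap.id) C.comul by rw [TensorProduct.map_id]]
  rw [map_map_assoc_symm]
  have h3 := LinearMap.congr_fun
    (map_split_r (LinearMap.id : H →ₗ[k] H) (map LinearMap.id C.comul) C.comul) (C.comul x)
  simp only [LinearMap.comp_apply] at h3
  rw [h3]

/-- cocommutativity kills the middle braiding of `(Δ ⊗ Δ) ∘ Δ`. -/
private lemma dagger :
    midMap k C.braid ∘ₗ map C.comul C.comul ∘ₗ C.comul = map C.comul C.comul ∘ₗ C.comul := by
  apply LinearMap.ext; intro x
  have hC1 := LinearMap.congr_fun C.C1 x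
  simp only [LinearMap.comp_apply, LinearEquiv.coe_coe] at hC1 ⊢
  rw [hC1, C.midMap_braid_symm_apply]
  congr 1
  have h3 := LinearMap.congr_fun
    (map_split_r (LinearMap.id : H →ₗ[k] H) C.Jmap
      (map LinearMap.id C.comul ∘ₗ C.comul)) (C.comul x)
  simp only [LinearMap.comp_apply] at h3
  rw [← h3, C.JT]

end ColorHopfAlg

end AuxMid
section AuxConv

variable {k G}

open TensorProduct

variable {X B : Type*} [AddCommGroup X] [Module k X] [AddCommGroup B] [Module k B]

private noncomputable def conv (ΔX : X →ₗ[k] X ⊗[k] X) (mB : B ⊗[k] B →ₗ[k] B)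
    (f g : X →ₗ[k] B) : X →ₗ[k] B := mB ∘ₗ map f g ∘ₗ ΔX

private lemma conv_assoc (ΔX : X →ₗ[k] X ⊗[k] X) (mB : B ⊗[k] B →ₗ[k] B)
    (hco : (TensorProduct.assoc k X X X).toLinearMap ∘ₗ map ΔX LinearMap.id ∘ₗ ΔX
      = map LinearMap.id ΔX ∘ₗ ΔX)
    (hm : mB ∘ₗ map mB LinearMap.id
      = mB ∘ₗ map LinearMap.id mB ∘ₗ (TensorProduct.assoc k B B B).toLinearMap)
    (f g h : X →ₗ[k] B) :
    conv ΔX mB (conv ΔX mB f g) h = conv ΔX mB f (conv ΔX mB g h) := by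
  have hmh : ∀ h' : X →ₗ[k] B, ∀ t : (B ⊗[k] B) ⊗[k] X,
      mB (map mB h' t)
        = mB ((map LinearMap.id (mB ∘ₗ map LinearMap.id h'))
            ((TensorProduct.assoc k B B X) t)) := by
    intro h' t
    have : mB ∘ₗ map mB h'
        = mB ∘ₗ map LinearMap.id (mB ∘ₗ map LinearMap.id h')
            ∘ₗ (TensorProduct.assoc k B B X).toLinearMap := by
      apply TensorProduct.ext_threefold; intro b₁ b₂ x
      have h0 := LinearMap.congr_fun hm ((b₁ ⊗ₜ[k] b₂) ⊗ₜ[k] (h' x))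
      simp only [LinearMap.comp_apply, map_tmul, LinearMap.id_coe, id_eq,
        LinearEquiv.coe_coe, assoc_tmul] at h0 ⊢
      exact h0
    have := LinearMap.congr_fun this t
    simpa only [LinearMap.comp_apply, LinearEquiv.coe_coe] using this
  apply LinearMap.ext; intro x
  simp only [conv, LinearMap.comp_apply]
  -- expand the left side
  have e1 := LinearMap.congr_fun
    (map_split_l mB (map f g ∘ₗ ΔX) h) (ΔX x)
  have e2 := LinearMap.congr_fun
    (map_split_l (map f g) ΔX (LinearMap.id : X →ₗ[k] X)) (ΔX x)
  simp only [LinearMap.comp_apply] at e1 e2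
  rw [e1, e2]
  have hco' : (map ΔX LinearMap.id) (ΔX x)
      = (TensorProduct.assoc k X X X).symm ((map LinearMap.id ΔX) (ΔX x)) := by
    have h0 := LinearMap.congr_fun hco x
    simp only [LinearMap.comp_apply, LinearEquiv.coe_coe] at h0
    rw [← h0, LinearEquiv.symm_apply_apply]
  rw [hco']
  rw [show (map (map f g) (LinearMap.id : X →ₗ[k] X)
        : (X ⊗[k] X) ⊗[k] X →ₗ[k] (B ⊗[k] B) ⊗[k] X)
      = map (map f g) LinearMap.id from rfl]
  rw [map_map_assoc_symm (f := f) (g := g) (h := (LinearMap.id : X →ₗ[k] X))]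
  rw [hmh h _, LinearEquiv.apply_symm_apply]
  -- now fuse maps on the left
  have e3 : ∀ t : X ⊗[k] (X ⊗[k] X),
      (map LinearMap.id (mB ∘ₗ map LinearMap.id h))
        ((map f (map g LinearMap.id)) t)
      = (map f (mB ∘ₗ map g h)) t := by
    intro t
    have : (map LinearMap.id (mB ∘ₗ map LinearMap.id h))
          ∘ₗ (map f (map g LinearMap.id))
        = map f (mB ∘ₗ map g h) := by
      apply TensorProduct.ext'; intro u v
      simp only [LinearMap.comp_apply, map_tmul, LinearMap.id_coe, id_eq]
      have hv := LinearMap.congr_fun (map_split_lr g h) v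
      simp only [LinearMap.comp_apply] at hv
      rw [← hv]
    exact LinearMap.congr_fun this t
  rw [e3]
  -- expand the right side
  have e4 : map f (mB ∘ₗ map g h ∘ₗ ΔX)
      = map f (mB ∘ₗ map g h) ∘ₗ map LinearMap.id ΔX := by
    rw [show mB ∘ₗ map g h ∘ₗ ΔX = (mB ∘ₗ map g h) ∘ₗ ΔX from rfl]
    exact map_split_r f (mB ∘ₗ map g h) ΔX
  rw [e4, LinearMap.comp_apply]

private lemma conv_one_left (ΔX : X →ₗ[k] X ⊗[k] X) (εX : X →ₗ[k] k)
    (mB : B ⊗[k] B →ₗ[k] B) (oneB : B)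
    (hcl : (TensorProduct.lid k X).toLinearMap ∘ₗ map εX LinearMap.id ∘ₗ ΔX
      = LinearMap.id)
    (h1l : ∀ t : B, mB (oneB ⊗ₜ[k] t) = t) (f : X →ₗ[k] B) :
    conv ΔX mB (εX.smulRight oneB) f = f := by
  apply LinearMap.ext; intro x
  simp only [conv, LinearMap.comp_apply]
  have key : mB ∘ₗ map (εX.smulRight oneB) f
      = f ∘ₗ (TensorProduct.lid k X).toLinearMap ∘ₗ map εX LinearMap.id := by
    apply TensorProduct.ext'; intro u v
    simp only [LinearMap.comp_apply, map_tmul, LinearMap.smulRight_apply,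
      LinearMap.id_coe, id_eq, LinearEquiv.coe_coe, lid_tmul]
    rw [← smul_tmul', map_smul, h1l, map_smul]
  have := LinearMap.congr_fun key (ΔX x)
  simp only [LinearMap.comp_apply] at this
  rw [this]
  have := LinearMap.congr_fun hcl x
  simp only [LinearMap.comp_apply, LinearMap.id_coe, id_eq] at this
  rw [this]

private lemma conv_one_right (ΔX : X →ₗ[k] X ⊗[k] X) (εX : X →ₗ[k] k)
    (mB : B ⊗[k] B →ₗ[k] B) (oneB : B)
    (hcr : (TensorProduct.rid k X).toLinearMap ∘ₗ map LinearMap.id εX ∘ₗ ΔX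
      = LinearMap.id)
    (h1r : ∀ t : B, mB (t ⊗ₜ[k] oneB) = t) (f : X →ₗ[k] B) :
    conv ΔX mB f (εX.smulRight oneB) = f := by
  apply LinearMap.ext; intro x
  simp only [conv, LinearMap.comp_apply]
  have key : mB ∘ₗ map f (εX.smulRight oneB)
      = f ∘ₗ (TensorProduct.rid k X).toLinearMap ∘ₗ map LinearMap.id εX := by
    apply TensorProduct.ext'; intro u v
    simp only [LinearMap.comp_apply, map_tmul, LinearMap.smulRight_apply,
      LinearMap.id_coe, id_eq, LinearEquiv.coe_coe, rid_tmul]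
    rw [tmul_smul, map_smul, h1r, map_smul]
  have := LinearMap.congr_fun key (ΔX x)
  simp only [LinearMap.comp_apply] at this
  rw [this]
  have := LinearMap.congr_fun hcr x
  simp only [LinearMap.comp_apply, LinearMap.id_coe, id_eq] at this
  rw [this]

private lemma conv_inv_unique (ΔX : X →ₗ[k] X ⊗[k] X) (εX : X →ₗ[k] k)
    (mB : B ⊗[k] B →ₗ[k] B) (oneB : B)
    (hco : (TensorProduct.assoc k X X X).toLinearMap ∘ₗ map ΔX LinearMap.id ∘ₗ ΔX
      = map LinearMap.id ΔX ∘ₗ ΔX)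
    (hm : mB ∘ₗ map mB LinearMap.id
      = mB ∘ₗ map LinearMap.id mB ∘ₗ (TensorProduct.assoc k B B B).toLinearMap)
    (hcl : (TensorProduct.lid k X).toLinearMap ∘ₗ map εX LinearMap.id ∘ₗ ΔX
      = LinearMap.id)
    (hcr : (TensorProduct.rid k X).toLinearMap ∘ₗ map LinearMap.id εX ∘ₗ ΔX
      = LinearMap.id)
    (h1l : ∀ t : B, mB (oneB ⊗ₜ[k] t) = t) (h1r : ∀ t : B, mB (t ⊗ₜ[k] oneB) = t)
    (a b c : X →ₗ[k] B)
    (hab : conv ΔX mB a b = εX.smulRight oneB)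
    (hca : conv ΔX mB c a = εX.smulRight oneB) : c = b := by
  have h1 : conv ΔX mB c (conv ΔX mB a b) = c := by
    rw [hab, conv_one_right ΔX εX mB oneB hcr h1r]
  have h2 : conv ΔX mB (conv ΔX mB c a) b = b := by
    rw [hca, conv_one_left ΔX εX mB oneB hcl h1l]
  rw [← h2, conv_assoc ΔX mB hco hm, h1]

end AuxConv
section AuxMore

variable {k G}

open TensorProduct

private lemma k2_decomp (t : k ⊗[k] k) :
    t = (TensorProduct.lid k k) t • ((1:k) ⊗ₜ[k] (1:k)) := by
  induction t using TensorProduct.induction_on with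
  | zero => simp
  | tmul c d =>
      rw [lid_tmul, smul_eq_mul]
      calc c ⊗ₜ[k] d = c • ((1:k) ⊗ₜ[k] d) := by rw [smul_tmul', smul_eq_mul, mul_one]
        _ = c • (d • ((1:k) ⊗ₜ[k] (1:k))) := by
              congr 1; rw [← tmul_smul, smul_eq_mul, mul_one]
        _ = (c * d) • ((1:k) ⊗ₜ[k] (1:k)) := by rw [smul_smul]
  | add a b ha hb => rw [map_add, add_smul, ← ha, ← hb]

namespace ColorHopfAlg

variable {H : Type*} [AddCommGroup H] [Module k H] (C : ColorHopfAlg k G H)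

private lemma counit_counit_comul (x : H) :
    (map C.counit C.counit) (C.comul x) = C.counit x • ((1:k) ⊗ₜ[k] (1:k)) := by
  have haux : ∀ t' : H ⊗[k] k,
      (TensorProduct.lid k k) ((map C.counit LinearMap.id) t')
        = C.counit ((TensorProduct.rid k H) t') := by
    intro t'
    induction t' using TensorProduct.induction_on with
    | zero => simp
    | tmul a c => simp only [map_tmul, LinearMap.id_coe, id_eq, lid_tmul, rid_tmul,
        map_smul, smul_eq_mul]; rw [mul_comm]
    | add a b ha hb => rw [map_add, map_add, map_add, map_add, ha, hb]
  have hsplit := LinearMap.congr_fun (map_split_lr' C.counit C.counit) (C.comul x)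
  simp only [LinearMap.comp_apply] at hsplit
  have hval : (TensorProduct.lid k k) ((map C.counit C.counit) (C.comul x))
      = C.counit x := by
    rw [hsplit, haux, C.counit_right]
  rw [k2_decomp ((map C.counit C.counit) (C.comul x)), hval]

private lemma E2 :
    map (C.counit.smulRight C.one) (C.counit.smulRight C.one) ∘ₗ C.comul
      = C.counit.smulRight (C.one ⊗ₜ[k] C.one) := by
  apply LinearMap.ext; intro x
  have hts : C.counit.smulRight C.one
      = LinearMap.toSpanSingleton k H C.one ∘ₗ C.counit := by
    apply LinearMap.ext; intro y
    simp [LinearMap.toSpanSingleton_apply]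
  simp only [LinearMap.comp_apply, LinearMap.smulRight_apply]
  rw [hts, TensorProduct.map_comp, LinearMap.comp_apply, C.counit_counit_comul,
    map_smul, map_tmul, LinearMap.toSpanSingleton_apply, one_smul]

private lemma map_smulRight_comp {M' B' : Type*} [AddCommGroup M'] [Module k M']
    [AddCommGroup B'] [Module k B'] (f : H →ₗ[k] M') (b : B') :
    map f (C.counit.smulRight b) ∘ₗ C.comul
      = (TensorProduct.mk k M' B').flip b ∘ₗ f := by
  have key : map f (C.counit.smulRight b)
      = (TensorProduct.mk k M' B').flip b ∘ₗ f
          ∘ₗ (TensorProduct.rid k H).toLinearMap ∘ₗ map LinearMap.id C.counit := by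
    apply TensorProduct.ext'; intro u v
    simp only [LinearMap.comp_apply, map_tmul, LinearMap.smulRight_apply,
      LinearMap.id_coe, id_eq, LinearEquiv.coe_coe, rid_tmul, map_smul,
      TensorProduct.mk_apply, LinearMap.flip_apply]
    rw [tmul_smul, smul_tmul']
  apply LinearMap.ext; intro x
  simp only [LinearMap.comp_apply]
  have h1 := LinearMap.congr_fun key (C.comul x)
  simp only [LinearMap.comp_apply, LinearEquiv.coe_coe] at h1
  rw [h1, C.counit_right]

private lemma mul_smulRight_comp :
    C.mul ∘ₗ map LinearMap.id (C.counit.smulRight C.one) ∘ₗ C.comul = LinearMap.id := by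
  have key : C.mul ∘ₗ map LinearMap.id (C.counit.smulRight C.one)
      = (TensorProduct.rid k H).toLinearMap ∘ₗ map LinearMap.id C.counit := by
    apply TensorProduct.ext'; intro u v
    simp only [LinearMap.comp_apply, map_tmul, LinearMap.smulRight_apply,
      LinearMap.id_coe, id_eq, LinearEquiv.coe_coe, rid_tmul]
    rw [tmul_smul, map_smul, C.mul_one']
  apply LinearMap.ext; intro x
  simp only [LinearMap.comp_apply, LinearMap.id_coe, id_eq]
  have h1 := LinearMap.congr_fun key (C.comul x)
  simp only [LinearMap.comp_apply, LinearEquiv.coe_coe] at h1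
  rw [h1, C.counit_right]

/-- general naturality of `midMap` for decorations on the four legs. -/
private lemma midMap_natural (f₁ f₂ f₃ f₄ : H →ₗ[k] H)
    (hbraid : C.braid ∘ₗ map f₂ f₃ = map f₃ f₂ ∘ₗ C.braid) :
    map (map f₁ f₃) (map f₂ f₄) ∘ₗ midMap k C.braid
      = midMap k C.braid ∘ₗ map (map f₁ f₂) (map f₃ f₄) := by
  apply TensorProduct.ext_fourfold'; intro x y u v
  simp only [LinearMap.comp_apply, map_tmul]
  rw [midMap_tmul_gen, midMap_tmul_gen]
  simp only [assoc_symm_tmul, map_tmul, LinearMap.id_coe, id_eq]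
  have hb := LinearMap.congr_fun hbraid (y ⊗ₜ[k] u)
  simp only [LinearMap.comp_apply, map_tmul] at hb
  rw [hb]
  generalize C.braid (y ⊗ₜ[k] u) = d
  induction d using TensorProduct.induction_on with
  | zero => simp
  | tmul d₁ d₂ => simp only [map_tmul, assoc_tmul, tmul_zero, map_zero,
      assoc_symm_tmul, LinearMap.id_coe, id_eq]
  | add s t hs ht =>
      simp only [map_add, add_tmul, tmul_add] at hs ht ⊢
      rw [hs, ht]

end ColorHopfAlg

end AuxMore
section AuxSplit

variable {k G}

open TensorProduct

variable {A' H' : Type*} [AddCommGroup A'] [Module k A'] [AddCommGroup H'] [Module k H']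
variable (CA : ColorHopfAlg k G A') (CH : ColorHopfAlg k G H')
variable (p : H' →ₗ[k] A') (i : A' →ₗ[k] H')

/-- `q = i ∘ S_A ∘ p`. -/
private noncomputable def qmap : H' →ₗ[k] H' := i ∘ₗ CA.antipode ∘ₗ p

private lemma pmul (hp : IsColorHom k G CH CA p) :
    p ∘ₗ CH.mul = CA.mul ∘ₗ map p p := by
  apply TensorProduct.ext'; intro x y
  simpa using hp.map_mul x y

private lemma imul (hi : IsColorHom k G CA CH i) :
    i ∘ₗ CA.mul = CH.mul ∘ₗ map i i := by
  apply TensorProduct.ext'; intro x y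
  simpa using hi.map_mul x y

/-- `F1`: a morphism of Hopf algebras commutes with the antipode (in the split situation). -/
private lemma F1 (hp : IsColorHom k G CH CA p) :
    CA.antipode ∘ₗ p = p ∘ₗ CH.antipode := by
  apply conv_inv_unique CH.comul CH.counit CA.mul CA.one CH.coassoc CA.mul_assoc_map
    CH.counit_left_map CH.counit_right_map CA.one_mul' CA.mul_one' p
  · -- conv p (p ∘ S) = ε • 1
    apply LinearMap.ext; intro x
    show CA.mul ((map p (p ∘ₗ CH.antipode)) (CH.comul x)) = _
    have h1 := LinearMap.congr_fun (map_split_r p p CH.antipode) (CH.comul x)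
    simp only [LinearMap.comp_apply] at h1
    rw [h1]
    have h2 := LinearMap.congr_fun (pmul CA CH p hp)
      ((map LinearMap.id CH.antipode) (CH.comul x))
    simp only [LinearMap.comp_apply] at h2
    rw [← h2, CH.antipode_right x, map_smul, hp.map_one, LinearMap.smulRight_apply]
  · -- conv (S_A ∘ p) p = ε • 1
    apply LinearMap.ext; intro x
    show CA.mul ((map (CA.antipode ∘ₗ p) p) (CH.comul x)) = _
    have h1 := LinearMap.congr_fun (map_split_l' CA.antipode p p) (CH.comul x)
    simp only [LinearMap.comp_apply] at h1
    rw [h1]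
    have h2 := LinearMap.congr_fun hp.map_comul x
    simp only [LinearMap.comp_apply] at h2
    rw [← h2, CA.antipode_left (p x), LinearMap.smulRight_apply,
      ← LinearMap.congr_fun hp.map_counit x, LinearMap.comp_apply]

/-- `F2`: the antipode of the (cocommutative) color Hopf algebra `A` is a coalgebra map. -/
private lemma F2 : map CA.antipode CA.antipode ∘ₗ CA.comul = CA.comul ∘ₗ CA.antipode := by
  have hbraid : CA.braid ∘ₗ map CA.antipode LinearMap.id
      = map LinearMap.id CA.antipode ∘ₗ CA.braid := by
    apply CA.braid_natural
    · exact fun γ x hx => CA.antipode_mem γ x hx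
    · intro γ x hx; simpa using hx
  apply conv_inv_unique CA.comul CA.counit CA.m2 (CA.one ⊗ₜ[k] CA.one) CA.coassoc
    CA.m2_assoc CA.counit_left_map CA.counit_right_map CA.m2_one_left CA.m2_one_right
    CA.comul
  · -- conv Δ (Δ ∘ S) = ε • (1 ⊗ 1)
    apply LinearMap.ext; intro x
    show CA.m2 ((map CA.comul (CA.comul ∘ₗ CA.antipode)) (CA.comul x)) = _
    have h1 := LinearMap.congr_fun (map_split_r CA.comul CA.comul CA.antipode)
      (CA.comul x)
    simp only [LinearMap.comp_apply] at h1
    rw [h1]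
    have h2 := LinearMap.congr_fun CA.comul_mul_m2
      ((map LinearMap.id CA.antipode) (CA.comul x))
    simp only [LinearMap.comp_apply] at h2
    rw [← h2, CA.antipode_right x, map_smul, CA.comul_one, LinearMap.smulRight_apply]
  · -- conv ((S ⊗ S) ∘ Δ) Δ = ε • (1 ⊗ 1)
    apply LinearMap.ext; intro x
    show CA.m2 ((map (map CA.antipode CA.antipode ∘ₗ CA.comul) CA.comul) (CA.comul x)) = _
    have h1 := LinearMap.congr_fun
      (map_split_l' (map CA.antipode CA.antipode) CA.comul CA.comul) (CA.comul x)
    simp only [LinearMap.comp_apply] at h1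
    rw [h1]
    -- move the antipodes through the mid braiding
    have hnat := CA.midMap_natural CA.antipode CA.antipode LinearMap.id LinearMap.id hbraid
    have hnat' := LinearMap.congr_fun hnat ((map CA.comul CA.comul) (CA.comul x))
    simp only [LinearMap.comp_apply] at hnat'
    rw [TensorProduct.map_id] at hnat'
    unfold ColorHopfAlg.m2
    rw [LinearMap.comp_apply]
    have hdag := LinearMap.congr_fun CA.dagger x
    simp only [LinearMap.comp_apply] at hdag
    rw [← hnat', hdag]
    have hfuse : map CA.mul CA.mul
          ∘ₗ map (map CA.antipode LinearMap.id) (map CA.antipode LinearMap.id)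
          ∘ₗ map CA.comul CA.comul
        = map (CA.mul ∘ₗ map CA.antipode LinearMap.id ∘ₗ CA.comul)
            (CA.mul ∘ₗ map CA.antipode LinearMap.id ∘ₗ CA.comul) := by
      apply TensorProduct.ext'; intro u v; simp
    have hfuse' := LinearMap.congr_fun hfuse (CA.comul x)
    simp only [LinearMap.comp_apply] at hfuse'
    rw [hfuse', CA.antipode_left_map]
    exact LinearMap.congr_fun CA.E2 x

private lemma N2 (hφ : CH.φ = CA.φ) (hi : IsColorHom k G CA CH i) :
    CH.braid ∘ₗ map i i = map i i ∘ₗ CA.braid := by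
  apply ext_on_span₂ CA.hom_span_top CA.hom_span_top
  rintro x ⟨γ₁, h₁⟩ y ⟨γ₂, h₂⟩
  simp only [LinearMap.comp_apply, map_tmul]
  rw [CH.braid_apply γ₁ γ₂ _ _ (hi.map_grade γ₁ x h₁) (hi.map_grade γ₂ y h₂),
    CA.braid_apply γ₁ γ₂ _ _ h₁ h₂, map_smul, map_tmul, hφ]

private lemma q_grade (hp : IsColorHom k G CH CA p) (hi : IsColorHom k G CA CH i) :
    ∀ γ x, x ∈ CH.grade γ → (qmap CA p i) x ∈ CH.grade γ := by
  intro γ x hx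
  exact hi.map_grade γ _ (CA.antipode_mem γ _ (hp.map_grade γ x hx))

private lemma pi_grade (hp : IsColorHom k G CH CA p) (hi : IsColorHom k G CA CH i) :
    ∀ γ x, x ∈ CH.grade γ → (i ∘ₗ p) x ∈ CH.grade γ := by
  intro γ x hx
  exact hi.map_grade γ _ (hp.map_grade γ x hx)

/-- comultiplication of `q`. -/
private lemma comul_q (hp : IsColorHom k G CH CA p) (hi : IsColorHom k G CA CH i) :
    CH.comul ∘ₗ qmap CA p i = map (qmap CA p i) (qmap CA p i) ∘ₗ CH.comul := by
  apply LinearMap.ext; intro x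
  simp only [LinearMap.comp_apply]
  have h1 := LinearMap.congr_fun hi.map_comul (CA.antipode (p x))
  simp only [LinearMap.comp_apply] at h1
  have h2 := LinearMap.congr_fun (F2 CA) (p x)
  simp only [LinearMap.comp_apply] at h2
  have h3 := LinearMap.congr_fun hp.map_comul x
  simp only [LinearMap.comp_apply] at h3
  have hfuse : map i i ∘ₗ map CA.antipode CA.antipode ∘ₗ map p p
      = map (qmap CA p i) (qmap CA p i) := by
    apply TensorProduct.ext'; intro u v
    simp only [LinearMap.comp_apply, map_tmul]; rfl
  have hfuse' := LinearMap.congr_fun hfuse (CH.comul x)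
  simp only [LinearMap.comp_apply] at hfuse'
  show CH.comul (i (CA.antipode (p x))) = _
  rw [h1, ← h2, h3, hfuse']

end AuxSplit
section AuxMulAssoc

variable {k G}
open TensorProduct

private lemma mul_map_assoc {H : Type*} [AddCommGroup H] [Module k H]
    (C : ColorHopfAlg k G H) {B' : Type*} [AddCommGroup B'] [Module k B']
    (h' : B' →ₗ[k] H) (t : (H ⊗[k] H) ⊗[k] B') :
    C.mul (map C.mul h' t)
      = C.mul ((map LinearMap.id (C.mul ∘ₗ map LinearMap.id h'))
          ((TensorProduct.assoc k H H B') t)) := by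
  have key : C.mul ∘ₗ map C.mul h'
      = C.mul ∘ₗ map LinearMap.id (C.mul ∘ₗ map LinearMap.id h')
          ∘ₗ (TensorProduct.assoc k H H B').toLinearMap := by
    apply TensorProduct.ext_threefold; intro b₁ b₂ x
    simp only [LinearMap.comp_apply, map_tmul, LinearMap.id_coe, id_eq,
      LinearEquiv.coe_coe, assoc_tmul]
    exact C.mul_assoc' b₁ b₂ (h' x)
  have := LinearMap.congr_fun key t
  simpa only [LinearMap.comp_apply, LinearEquiv.coe_coe] using this

end AuxMulAssoc

section AuxSplit2

variable {k G}
open TensorProduct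

variable {A' H' : Type*} [AddCommGroup A'] [Module k A'] [AddCommGroup H'] [Module k H']
variable (CA : ColorHopfAlg k G A') (CH : ColorHopfAlg k G H')
variable (p : H' →ₗ[k] A') (i : A' →ₗ[k] H')

/-- the retraction `g₀ = mul ∘ (id ⊗ q) ∘ Δ`. -/
private noncomputable def g0q : H' →ₗ[k] H' :=
  CH.mul ∘ₗ map LinearMap.id (qmap CA p i) ∘ₗ CH.comul

private lemma g0_eq (hp : IsColorHom k G CH CA p) :
    CH.mul ∘ₗ map LinearMap.id (i ∘ₗ p ∘ₗ CH.antipode) ∘ₗ CH.comul = g0q CA CH p i := by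
  have hqt : i ∘ₗ p ∘ₗ CH.antipode = qmap CA p i := by
    unfold qmap
    rw [← F1 CA CH p hp]
  rw [hqt]; rfl

private lemma comul_g0 (hp : IsColorHom k G CH CA p) (hi : IsColorHom k G CA CH i) :
    CH.comul ∘ₗ g0q CA CH p i = map (g0q CA CH p i) (g0q CA CH p i) ∘ₗ CH.comul := by
  apply LinearMap.ext; intro x
  simp only [LinearMap.comp_apply]
  show CH.comul (CH.mul ((map LinearMap.id (qmap CA p i)) (CH.comul x))) = _
  have h1 := LinearMap.congr_fun CH.comul_mul_m2
    ((map LinearMap.id (qmap CA p i)) (CH.comul x))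
  simp only [LinearMap.comp_apply] at h1
  rw [h1]
  have c2 : map CH.comul CH.comul ∘ₗ map LinearMap.id (qmap CA p i)
      = map LinearMap.id (map (qmap CA p i) (qmap CA p i)) ∘ₗ map CH.comul CH.comul := by
    apply TensorProduct.ext'; intro u v
    simp only [LinearMap.comp_apply, map_tmul, LinearMap.id_coe, id_eq]
    congr 1
    have := LinearMap.congr_fun (comul_q CA CH p i hp hi) v
    simpa only [LinearMap.comp_apply] using this
  have c2' := LinearMap.congr_fun c2 (CH.comul x)
  simp only [LinearMap.comp_apply] at c2'
  rw [c2']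
  have hbq : CH.braid ∘ₗ map LinearMap.id (qmap CA p i)
      = map (qmap CA p i) LinearMap.id ∘ₗ CH.braid := by
    apply CH.braid_natural
    · intro γ y hy; simpa using hy
    · exact q_grade CA CH p i hp hi
  have hnat := CH.midMap_natural LinearMap.id LinearMap.id (qmap CA p i) (qmap CA p i) hbq
  have hnat' := LinearMap.congr_fun hnat ((map CH.comul CH.comul) (CH.comul x))
  simp only [LinearMap.comp_apply] at hnat'
  rw [TensorProduct.map_id] at hnat'
  unfold ColorHopfAlg.m2
  rw [LinearMap.comp_apply, ← hnat']
  have hdag := LinearMap.congr_fun CH.dagger x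
  simp only [LinearMap.comp_apply] at hdag
  rw [hdag]
  have hfuse : map CH.mul CH.mul
        ∘ₗ map (map LinearMap.id (qmap CA p i)) (map LinearMap.id (qmap CA p i))
        ∘ₗ map CH.comul CH.comul
      = map (g0q CA CH p i) (g0q CA CH p i) := by
    apply TensorProduct.ext'; intro u v
    simp only [LinearMap.comp_apply, map_tmul]
    rfl
  have hfuse' := LinearMap.congr_fun hfuse (CH.comul x)
  simp only [LinearMap.comp_apply] at hfuse'
  rw [hfuse']

private lemma p_g0 (hp : IsColorHom k G CH CA p) (hpi : p ∘ₗ i = LinearMap.id) :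
    p ∘ₗ g0q CA CH p i = CH.counit.smulRight CA.one := by
  apply LinearMap.ext; intro x
  simp only [LinearMap.comp_apply, LinearMap.smulRight_apply]
  show p (CH.mul ((map LinearMap.id (qmap CA p i)) (CH.comul x))) = _
  have h1 := LinearMap.congr_fun (pmul CA CH p hp)
    ((map LinearMap.id (qmap CA p i)) (CH.comul x))
  simp only [LinearMap.comp_apply] at h1
  rw [h1]
  have hpq : p ∘ₗ qmap CA p i = CA.antipode ∘ₗ p := by
    unfold qmap
    rw [show p ∘ₗ (i ∘ₗ (CA.antipode ∘ₗ p)) = (p ∘ₗ i) ∘ₗ (CA.antipode ∘ₗ p) from rfl,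
      hpi, LinearMap.id_comp]
  have c1 : map p p ∘ₗ map LinearMap.id (qmap CA p i)
      = map LinearMap.id CA.antipode ∘ₗ map p p := by
    apply TensorProduct.ext'; intro u v
    simp only [LinearMap.comp_apply, map_tmul, LinearMap.id_coe, id_eq]
    congr 1
    exact LinearMap.congr_fun hpq v
  have c1' := LinearMap.congr_fun c1 (CH.comul x)
  simp only [LinearMap.comp_apply] at c1'
  rw [c1']
  have h2 := LinearMap.congr_fun hp.map_comul x
  simp only [LinearMap.comp_apply] at h2
  rw [← h2, CA.antipode_right (p x)]
  rw [← LinearMap.congr_fun hp.map_counit x]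
  rfl

private lemma goal2' (hp : IsColorHom k G CH CA p) (hi : IsColorHom k G CA CH i)
    (hpi : p ∘ₗ i = LinearMap.id) (x : H') :
    (map LinearMap.id p) (CH.comul (g0q CA CH p i x))
      = (g0q CA CH p i x) ⊗ₜ[k] CA.one := by
  have h1 := LinearMap.congr_fun (comul_g0 CA CH p i hp hi) x
  simp only [LinearMap.comp_apply] at h1
  rw [h1]
  have c1 : map LinearMap.id p ∘ₗ map (g0q CA CH p i) (g0q CA CH p i)
      = map (g0q CA CH p i) (p ∘ₗ g0q CA CH p i) := by
    apply TensorProduct.ext'; intro u v; simp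
  have c1' := LinearMap.congr_fun c1 (CH.comul x)
  simp only [LinearMap.comp_apply] at c1'
  rw [c1', p_g0 CA CH p i hp hpi]
  have h2 := LinearMap.congr_fun (CH.map_smulRight_comp (g0q CA CH p i) CA.one) x
  simp only [LinearMap.comp_apply] at h2
  rw [h2]
  rfl

private lemma inner3 (hp : IsColorHom k G CH CA p) (hi : IsColorHom k G CA CH i) :
    CH.mul ∘ₗ map (qmap CA p i) (i ∘ₗ p) ∘ₗ CH.comul = CH.counit.smulRight CH.one := by
  apply LinearMap.ext; intro y
  simp only [LinearMap.comp_apply, LinearMap.smulRight_apply]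
  have c1 : (map (qmap CA p i) (i ∘ₗ p) : H' ⊗[k] H' →ₗ[k] H' ⊗[k] H')
      = map i i ∘ₗ map (CA.antipode ∘ₗ p) p := by
    apply TensorProduct.ext'; intro u v
    simp only [LinearMap.comp_apply, map_tmul]
    rfl
  have c1' := LinearMap.congr_fun c1 (CH.comul y)
  simp only [LinearMap.comp_apply] at c1'
  rw [c1']
  have h2 := LinearMap.congr_fun (imul CA CH i hi)
    ((map (CA.antipode ∘ₗ p) p) (CH.comul y))
  simp only [LinearMap.comp_apply] at h2
  rw [← h2]
  have h3 := LinearMap.congr_fun (map_split_l' CA.antipode p p) (CH.comul y)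
  simp only [LinearMap.comp_apply] at h3
  rw [h3]
  have h4 := LinearMap.congr_fun hp.map_comul y
  simp only [LinearMap.comp_apply] at h4
  rw [← h4, CA.antipode_left (p y), ← LinearMap.congr_fun hp.map_counit y]
  simp only [LinearMap.comp_apply, map_smul, hi.map_one]

private lemma goal3' (hp : IsColorHom k G CH CA p) (hi : IsColorHom k G CA CH i)
    (hpi : p ∘ₗ i = LinearMap.id) :
    CH.mul ∘ₗ map (g0q CA CH p i) (i ∘ₗ p) ∘ₗ CH.comul = LinearMap.id := by
  apply LinearMap.ext; intro x
  simp only [LinearMap.comp_apply, LinearMap.id_coe, id_eq]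
  have e1 := LinearMap.congr_fun
    (map_split_l CH.mul (map LinearMap.id (qmap CA p i) ∘ₗ CH.comul) (i ∘ₗ p))
    (CH.comul x)
  simp only [LinearMap.comp_apply] at e1
  rw [show (map (g0q CA CH p i) (i ∘ₗ p)) (CH.comul x)
      = (map (CH.mul ∘ₗ (map LinearMap.id (qmap CA p i) ∘ₗ CH.comul)) (i ∘ₗ p))
          (CH.comul x) from rfl, e1]
  have e2 := LinearMap.congr_fun
    (map_split_l (map LinearMap.id (qmap CA p i)) CH.comul
      (LinearMap.id : H' →ₗ[k] H')) (CH.comul x)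
  simp only [LinearMap.comp_apply] at e2
  rw [e2]
  have e3 : (map CH.comul LinearMap.id) (CH.comul x)
      = (TensorProduct.assoc k H' H' H').symm
          ((map LinearMap.id CH.comul) (CH.comul x)) := by
    have h0 := LinearMap.congr_fun CH.coassoc x
    simp only [LinearMap.comp_apply, LinearEquiv.coe_coe] at h0
    rw [← h0, LinearEquiv.symm_apply_apply]
  rw [e3]
  have e4 := map_map_assoc_symm (f := LinearMap.id (M := H'))
    (g := qmap CA p i) (h := (LinearMap.id : H' →ₗ[k] H'))
    ((map LinearMap.id CH.comul) (CH.comul x))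
  rw [e4]
  rw [mul_map_assoc CH (i ∘ₗ p) _, LinearEquiv.apply_symm_apply]
  have e6 : (map (LinearMap.id : H' →ₗ[k] H') (CH.mul ∘ₗ map LinearMap.id (i ∘ₗ p)))
        ((map (LinearMap.id : H' →ₗ[k] H') (map (qmap CA p i) LinearMap.id))
          ((map (LinearMap.id : H' →ₗ[k] H') CH.comul) (CH.comul x)))
      = (map (LinearMap.id : H' →ₗ[k] H')
          ((CH.mul ∘ₗ map (qmap CA p i) (i ∘ₗ p)) ∘ₗ CH.comul)) (CH.comul x) := by
    have c : map (LinearMap.id : H' →ₗ[k] H') (CH.mul ∘ₗ map LinearMap.id (i ∘ₗ p))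
          ∘ₗ map (LinearMap.id : H' →ₗ[k] H') (map (qmap CA p i) LinearMap.id)
          ∘ₗ map (LinearMap.id : H' →ₗ[k] H') CH.comul
        = map (LinearMap.id : H' →ₗ[k] H')
            ((CH.mul ∘ₗ map (qmap CA p i) (i ∘ₗ p)) ∘ₗ CH.comul) := by
      apply TensorProduct.ext'; intro u v
      simp only [LinearMap.comp_apply, map_tmul, LinearMap.id_coe, id_eq]
      congr 1
      have := LinearMap.congr_fun (map_split_lr (qmap CA p i) (i ∘ₗ p)) (CH.comul v)
      simp only [LinearMap.comp_apply] at this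
      rw [← this]
    have := LinearMap.congr_fun c (CH.comul x)
    simpa only [LinearMap.comp_apply] using this
  rw [e6]
  rw [show (CH.mul ∘ₗ map (qmap CA p i) (i ∘ₗ p)) ∘ₗ CH.comul
      = CH.mul ∘ₗ map (qmap CA p i) (i ∘ₗ p) ∘ₗ CH.comul from rfl,
    inner3 CA CH p i hp hi]
  have := LinearMap.congr_fun CH.mul_smulRight_comp x
  simpa only [LinearMap.comp_apply, LinearMap.id_coe, id_eq] using this

end AuxSplit2
section AuxSplit3

variable {k G}
open TensorProduct

variable {A' H' : Type*} [AddCommGroup A'] [Module k A'] [AddCommGroup H'] [Module k H']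
variable (CA : ColorHopfAlg k G A') (CH : ColorHopfAlg k G H')
variable (p : H' →ₗ[k] A') (i : A' →ₗ[k] H')

/-- the "mixed" middle interchange on `(H ⊗ A) ⊗ (A ⊗ A)` braiding the two middle
`A`-factors. -/
private noncomputable def midHA : (H' ⊗[k] A') ⊗[k] (A' ⊗[k] A') →ₗ[k]
    (H' ⊗[k] A') ⊗[k] (A' ⊗[k] A') :=
  (TensorProduct.assoc k H' A' (A' ⊗[k] A')).symm.toLinearMap ∘ₗ
    (map LinearMap.id ((TensorProduct.assoc k A' A' A').toLinearMap ∘ₗ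
      map CA.braid LinearMap.id ∘ₗ (TensorProduct.assoc k A' A' A').symm.toLinearMap)) ∘ₗ
    (TensorProduct.assoc k H' A' (A' ⊗[k] A')).toLinearMap

private lemma midHA_one (x : H') (u v : A') :
    midHA CA ((x ⊗ₜ[k] CA.one) ⊗ₜ[k] (u ⊗ₜ[k] v))
      = (x ⊗ₜ[k] u) ⊗ₜ[k] (CA.one ⊗ₜ[k] v) := by
  unfold midHA
  simp only [LinearMap.comp_apply, LinearEquiv.coe_coe, assoc_tmul, map_tmul,
    LinearMap.id_coe, id_eq, assoc_symm_tmul, CA.braid_one_left]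

private lemma M5 (hφ : CH.φ = CA.φ) (hi : IsColorHom k G CA CH i) :
    midMap k CH.braid ∘ₗ map (map LinearMap.id (i ∘ₗ p)) (map i i)
      = map (map LinearMap.id i) (map i i) ∘ₗ midHA CA
          ∘ₗ map (map LinearMap.id p) LinearMap.id := by
  apply TensorProduct.ext_fourfold'; intro x y a b
  simp only [LinearMap.comp_apply, map_tmul, LinearMap.id_coe, id_eq]
  rw [midMap_tmul_gen]
  unfold midHA
  simp only [LinearMap.comp_apply, LinearEquiv.coe_coe, assoc_tmul, map_tmul,
    LinearMap.id_coe, id_eq, assoc_symm_tmul]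
  have hN2 := LinearMap.congr_fun (N2 CA CH i hφ hi) (p y ⊗ₜ[k] a)
  simp only [LinearMap.comp_apply, map_tmul] at hN2
  rw [hN2]
  generalize CA.braid (p y ⊗ₜ[k] a) = d
  induction d using TensorProduct.induction_on with
  | zero => simp
  | tmul d₁ d₂ => simp only [map_tmul, assoc_tmul, assoc_symm_tmul,
      LinearMap.id_coe, id_eq]
  | add s t hs ht =>
      simp only [map_add, add_tmul, tmul_add] at hs ht ⊢
      rw [hs, ht]

private lemma STAGE {W Z : Type*} [AddCommGroup W] [Module k W]
    [AddCommGroup Z] [Module k Z]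
    (hφ : CH.φ = CA.φ) (hp : IsColorHom k G CH CA p) (hi : IsColorHom k G CA CH i)
    (hpi : p ∘ₗ i = LinearMap.id) (u : H' →ₗ[k] W) (w : A' →ₗ[k] Z)
    (s : (H' ⊗[k] H') ⊗[k] (A' ⊗[k] A')) :
    (map (u ∘ₗ CH.mul) (w ∘ₗ CA.mul ∘ₗ map p p))
        ((midMap k CH.braid) ((map LinearMap.id (map i i)) s))
      = (map (u ∘ₗ CH.mul ∘ₗ map LinearMap.id i) (w ∘ₗ CA.mul))
          ((midHA CA) ((map (map LinearMap.id p) LinearMap.id) s)) := by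
  have hpi' := LinearMap.congr_fun hpi
  simp only [LinearMap.comp_apply, LinearMap.id_coe, id_eq] at hpi'
  -- insert `i ∘ p` in the second pair's first slot
  have a2 : ∀ t : (H' ⊗[k] H') ⊗[k] (H' ⊗[k] H'),
      (map (u ∘ₗ CH.mul) (w ∘ₗ CA.mul ∘ₗ map p p)) t
        = (map (u ∘ₗ CH.mul) (w ∘ₗ CA.mul ∘ₗ map p p))
            ((map LinearMap.id (map (i ∘ₗ p) LinearMap.id)) t) := by
    intro t
    have c : map (u ∘ₗ CH.mul) (w ∘ₗ CA.mul ∘ₗ map p p)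
          ∘ₗ map LinearMap.id (map (i ∘ₗ p) LinearMap.id)
        = map (u ∘ₗ CH.mul) (w ∘ₗ CA.mul ∘ₗ map p p) := by
      apply TensorProduct.ext'; intro t₁ t₂
      simp only [LinearMap.comp_apply, map_tmul, LinearMap.id_coe, id_eq]
      congr 2
      induction t₂ using TensorProduct.induction_on with
      | zero => simp
      | tmul y₁ y₂ => simp only [map_tmul, LinearMap.comp_apply, LinearMap.id_coe,
          id_eq, hpi']
      | add s' t' hs' ht' => simp only [map_add, hs', ht']
    exact (LinearMap.congr_fun c t).symm
  rw [a2]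
  have hb : CH.braid ∘ₗ map (i ∘ₗ p) LinearMap.id
      = map LinearMap.id (i ∘ₗ p) ∘ₗ CH.braid := by
    apply CH.braid_natural
    · exact pi_grade CA CH p i hp hi
    · intro γ y hy; simpa using hy
  have hnat := CH.midMap_natural LinearMap.id (i ∘ₗ p) LinearMap.id LinearMap.id hb
  have hnat' := LinearMap.congr_fun hnat ((map LinearMap.id (map i i)) s)
  simp only [LinearMap.comp_apply] at hnat'
  rw [TensorProduct.map_id] at hnat'
  rw [hnat']
  have a4 : (map (map (LinearMap.id : H' →ₗ[k] H') (i ∘ₗ p)) LinearMap.id)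
        ((map (LinearMap.id : (H' ⊗[k] H') →ₗ[k] H' ⊗[k] H') (map i i)) s)
      = (map (map (LinearMap.id : H' →ₗ[k] H') (i ∘ₗ p)) (map i i)) s := by
    have c : map (map (LinearMap.id : H' →ₗ[k] H') (i ∘ₗ p)) LinearMap.id
          ∘ₗ map (LinearMap.id : (H' ⊗[k] H') →ₗ[k] H' ⊗[k] H') (map i i)
        = map (map (LinearMap.id : H' →ₗ[k] H') (i ∘ₗ p)) (map i i) := by
      apply TensorProduct.ext'; intro t₁ t₂; simp
    exact LinearMap.congr_fun c s
  rw [a4]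
  have hM5 := LinearMap.congr_fun (M5 CA CH p i hφ hi) s
  simp only [LinearMap.comp_apply] at hM5
  rw [hM5]
  have a5 : map (u ∘ₗ CH.mul) (w ∘ₗ CA.mul ∘ₗ map p p)
        ∘ₗ map (map LinearMap.id i) (map i i)
      = map (u ∘ₗ CH.mul ∘ₗ map LinearMap.id i) (w ∘ₗ CA.mul) := by
    apply TensorProduct.ext'; intro t₁ t₂
    simp only [LinearMap.comp_apply, map_tmul]
    have hred : (map p p) ((map i i) t₂) = t₂ := by
      induction t₂ using TensorProduct.induction_on with
      | zero => simp
      | tmul y₁ y₂ => simp only [map_tmul, LinearMap.comp_apply, LinearMap.id_coe,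
          id_eq, hpi']
      | add s' t' hs' ht' => simp only [map_add, hs', ht']
    rw [hred]
  have := LinearMap.congr_fun a5 ((midHA CA) ((map (map LinearMap.id p) LinearMap.id) s))
  simp only [LinearMap.comp_apply] at this
  rw [this]

private lemma CORE (hi : IsColorHom k G CA CH i) (t : H' ⊗[k] A') :
    CH.comul (CH.mul ((map LinearMap.id i) t))
      = (map CH.mul CH.mul) ((midMap k CH.braid)
          ((map LinearMap.id (map i i)) ((map CH.comul CA.comul) t))) := by
  have h1 := LinearMap.congr_fun CH.comul_mul_m2 ((map LinearMap.id i) t)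
  simp only [LinearMap.comp_apply] at h1
  rw [h1]
  have c : map CH.comul CH.comul ∘ₗ map LinearMap.id i
      = map LinearMap.id (map i i) ∘ₗ map CH.comul CA.comul := by
    apply TensorProduct.ext'; intro x a
    simp only [LinearMap.comp_apply, map_tmul, LinearMap.id_coe, id_eq]
    congr 1
    have := LinearMap.congr_fun hi.map_comul a
    simpa only [LinearMap.comp_apply] using this
  have c' := LinearMap.congr_fun c t
  simp only [LinearMap.comp_apply] at c'
  unfold ColorHopfAlg.m2
  rw [LinearMap.comp_apply, c']

private lemma C4 (hφ : CH.φ = CA.φ) (hp : IsColorHom k G CH CA p)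
    (hi : IsColorHom k G CA CH i) (hpi : p ∘ₗ i = LinearMap.id) (t : H' ⊗[k] A') :
    (map (g0q CA CH p i) p) (CH.comul (CH.mul ((map LinearMap.id i) t)))
      = (map (g0q CA CH p i ∘ₗ CH.mul ∘ₗ map LinearMap.id i) CA.mul)
          ((midHA CA) ((map (map LinearMap.id p ∘ₗ CH.comul) CA.comul) t)) := by
  rw [CORE CA CH i hi t]
  have c1 : map (g0q CA CH p i) p ∘ₗ map CH.mul CH.mul
      = map (g0q CA CH p i ∘ₗ CH.mul) (p ∘ₗ CH.mul) := by
    apply TensorProduct.ext'; intro t₁ t₂; simp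
  have c1' := LinearMap.congr_fun c1
    ((midMap k CH.braid) ((map LinearMap.id (map i i)) ((map CH.comul CA.comul) t)))
  simp only [LinearMap.comp_apply] at c1'
  rw [c1']
  rw [show (p ∘ₗ CH.mul : H' ⊗[k] H' →ₗ[k] A')
      = LinearMap.id ∘ₗ CA.mul ∘ₗ map p p by rw [pmul CA CH p hp, LinearMap.id_comp]]
  rw [STAGE CA CH p i hφ hp hi hpi (g0q CA CH p i) LinearMap.id]
  rw [LinearMap.id_comp]
  have c2 : (map (map LinearMap.id p) LinearMap.id)
        ((map CH.comul CA.comul) t)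
      = (map (map LinearMap.id p ∘ₗ CH.comul) CA.comul) t := by
    have c : map (map (LinearMap.id : H' →ₗ[k] H') p) LinearMap.id
          ∘ₗ map CH.comul CA.comul
        = map (map LinearMap.id p ∘ₗ CH.comul) CA.comul := by
      apply TensorProduct.ext'; intro t₁ t₂; simp
    exact LinearMap.congr_fun c t
  rw [c2]

private lemma R3C (hφ : CH.φ = CA.φ) (hp : IsColorHom k G CH CA p)
    (hi : IsColorHom k G CA CH i) (hpi : p ∘ₗ i = LinearMap.id) (t : H' ⊗[k] A') :
    g0q CA CH p i (CH.mul ((map LinearMap.id i) t))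
      = CH.mul ((map (CH.mul ∘ₗ map LinearMap.id i)
          (i ∘ₗ CA.antipode ∘ₗ CA.mul))
          ((midHA CA) ((map (map LinearMap.id p ∘ₗ CH.comul) CA.comul) t))) := by
  show CH.mul ((map LinearMap.id (qmap CA p i))
    (CH.comul (CH.mul ((map LinearMap.id i) t)))) = _
  rw [CORE CA CH i hi t]
  have c1 : map (LinearMap.id : H' →ₗ[k] H') (qmap CA p i) ∘ₗ map CH.mul CH.mul
      = map (LinearMap.id ∘ₗ CH.mul)
          ((i ∘ₗ CA.antipode) ∘ₗ CA.mul ∘ₗ map p p) := by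
    apply TensorProduct.ext'; intro t₁ t₂
    simp only [LinearMap.comp_apply, map_tmul, LinearMap.id_coe, id_eq]
    congr 1
    have := LinearMap.congr_fun (pmul CA CH p hp) t₂
    simp only [LinearMap.comp_apply] at this
    show i (CA.antipode (p (CH.mul t₂))) = _
    rw [this]
  have c1' := LinearMap.congr_fun c1
    ((midMap k CH.braid) ((map LinearMap.id (map i i)) ((map CH.comul CA.comul) t)))
  simp only [LinearMap.comp_apply] at c1'
  rw [c1']
  have hst := STAGE CA CH p i hφ hp hi hpi LinearMap.id (i ∘ₗ CA.antipode)
    ((map CH.comul CA.comul) t)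
  rw [show (LinearMap.id ∘ₗ CH.mul : H' ⊗[k] H' →ₗ[k] H') = CH.mul
      from LinearMap.id_comp _] at hst ⊢
  rw [hst]
  have c2 : (map (map LinearMap.id p) LinearMap.id)
        ((map CH.comul CA.comul) t)
      = (map (map LinearMap.id p ∘ₗ CH.comul) CA.comul) t := by
    have c : map (map (LinearMap.id : H' →ₗ[k] H') p) LinearMap.id
          ∘ₗ map CH.comul CA.comul
        = map (map LinearMap.id p ∘ₗ CH.comul) CA.comul := by
      apply TensorProduct.ext'; intro t₁ t₂; simp
    exact LinearMap.congr_fun c t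
  rw [c2]
  rfl

end AuxSplit3
section AuxSplit4

variable {k G}
open TensorProduct

variable {A' H' : Type*} [AddCommGroup A'] [Module k A'] [AddCommGroup H'] [Module k H']
variable (CA : ColorHopfAlg k G A') (CH : ColorHopfAlg k G H')
variable (p : H' →ₗ[k] A') (i : A' →ₗ[k] H')

private lemma mem_hker (x : H') :
    x ∈ CH.hkerOf CA p ↔ (map LinearMap.id p) (CH.comul x) = x ⊗ₜ[k] CA.one := by
  have h0 : x ∈ CH.hkerOf CA p
      ↔ ((map LinearMap.id p ∘ₗ CH.comul)
          - (TensorProduct.mk k H' A').flip CA.one) x = 0 := Iff.rfl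
  rw [h0, LinearMap.sub_apply, sub_eq_zero, LinearMap.comp_apply,
    LinearMap.flip_apply, TensorProduct.mk_apply]

private lemma R3 (hφ : CH.φ = CA.φ) (hp : IsColorHom k G CH CA p)
    (hi : IsColorHom k G CA CH i) (hpi : p ∘ₗ i = LinearMap.id) (x : H')
    (hx : (map LinearMap.id p) (CH.comul x) = x ⊗ₜ[k] CA.one) (u : A') :
    g0q CA CH p i (CH.mul (x ⊗ₜ[k] i u)) = CA.counit u • x := by
  have h := R3C CA CH p i hφ hp hi hpi (x ⊗ₜ[k] u)
  simp only [map_tmul, LinearMap.id_coe, id_eq] at h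
  rw [h]
  have hDp : (map LinearMap.id p ∘ₗ CH.comul) x = x ⊗ₜ[k] CA.one := by
    simp only [LinearMap.comp_apply]; exact hx
  rw [hDp]
  have hL : (CH.mul ∘ₗ map (CH.mul ∘ₗ map LinearMap.id i)
        (i ∘ₗ CA.antipode ∘ₗ CA.mul) ∘ₗ midHA CA)
        ∘ₗ (TensorProduct.mk k (H' ⊗[k] A') (A' ⊗[k] A')) (x ⊗ₜ[k] CA.one)
      = CH.mul ∘ₗ (TensorProduct.mk k H' H') x ∘ₗ i ∘ₗ CA.mul
          ∘ₗ map LinearMap.id CA.antipode := by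
    apply TensorProduct.ext'; intro u' v'
    simp only [LinearMap.comp_apply, TensorProduct.mk_apply]
    rw [midHA_one]
    simp only [map_tmul, LinearMap.comp_apply, LinearMap.id_coe, id_eq,
      CA.one_mul']
    rw [CH.mul_assoc']
    congr 1
    have := LinearMap.congr_fun (imul CA CH i hi) (u' ⊗ₜ[k] CA.antipode v')
    simp only [LinearMap.comp_apply, map_tmul] at this
    rw [← this]
  have hL' := LinearMap.congr_fun hL (CA.comul u)
  simp only [LinearMap.comp_apply, TensorProduct.mk_apply] at hL'
  rw [hL', CA.antipode_right u, map_smul, hi.map_one, tmul_smul, map_smul,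
    CH.mul_one']

private lemma goal4' (hφ : CH.φ = CA.φ) (hp : IsColorHom k G CH CA p)
    (hi : IsColorHom k G CA CH i) (hpi : p ∘ₗ i = LinearMap.id) (x : H')
    (hx : (map LinearMap.id p) (CH.comul x) = x ⊗ₜ[k] CA.one) (a : A') :
    (map (g0q CA CH p i) p) (CH.comul (CH.mul (x ⊗ₜ[k] i a))) = x ⊗ₜ[k] a := by
  have h := C4 CA CH p i hφ hp hi hpi (x ⊗ₜ[k] a)
  simp only [map_tmul, LinearMap.id_coe, id_eq] at h
  rw [h]
  have hDp : (map LinearMap.id p ∘ₗ CH.comul) x = x ⊗ₜ[k] CA.one := by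
    simp only [LinearMap.comp_apply]; exact hx
  rw [hDp]
  have hM : (map (g0q CA CH p i ∘ₗ CH.mul ∘ₗ map LinearMap.id i) CA.mul
        ∘ₗ midHA CA)
        ∘ₗ (TensorProduct.mk k (H' ⊗[k] A') (A' ⊗[k] A')) (x ⊗ₜ[k] CA.one)
      = (TensorProduct.mk k H' A') x ∘ₗ (TensorProduct.lid k A').toLinearMap
          ∘ₗ map CA.counit LinearMap.id := by
    apply TensorProduct.ext'; intro u v
    simp only [LinearMap.comp_apply, TensorProduct.mk_apply]
    rw [midHA_one]
    simp only [map_tmul, LinearMap.comp_apply, LinearMap.id_coe, id_eq,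
      CA.one_mul', LinearEquiv.coe_coe, lid_tmul]
    rw [R3 CA CH p i hφ hp hi hpi x hx u]
    rw [← smul_tmul', tmul_smul]
  have hM' := LinearMap.congr_fun hM (CA.comul a)
  simp only [LinearMap.comp_apply, TensorProduct.mk_apply, LinearEquiv.coe_coe] at hM'
  rw [hM', CA.counit_left a]

end AuxSplit4
/-- for a split pair `p : H → A`, `i : A → H` of morphisms of color Hopf
algebras (`A` cocommutative), `f : Hker(p) ⋊ A → H, k ⊗ a ↦ k i(a)` is an isomorphism
of color Hopf algebras with inverse `g(h) = h₁ i(p(S(h₂))) ⊗ p(h₃)`. -/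
theorem smash_decomposition (CA : ColorHopfAlg k G A) (CH : ColorHopfAlg k G HH)
    (hφ : CH.φ = CA.φ) (p : HH →ₗ[k] A) (i : A →ₗ[k] HH)
    (hp : IsColorHom k G CH CA p) (hi : IsColorHom k G CA CH i)
    (hpi : p ∘ₗ i = LinearMap.id) :
    Function.Bijective
      (CH.mul ∘ₗ TensorProduct.map (CH.hkerOf CA p).subtype i :
        (CH.hkerOf CA p) ⊗[k] A →ₗ[k] HH) ∧
    (∀ x : HH,
      (CH.mul ∘ₗ (TensorProduct.map LinearMap.id (i ∘ₗ p ∘ₗ CH.antipode)) ∘ₗ CH.comul) x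
        ∈ CH.hkerOf CA p) ∧
    (∀ x : HH,
      (CH.mul ∘ₗ TensorProduct.map LinearMap.id i)
        ((TensorProduct.map
            (CH.mul ∘ₗ (TensorProduct.map LinearMap.id (i ∘ₗ p ∘ₗ CH.antipode)) ∘ₗ
              CH.comul) p) (CH.comul x)) = x) ∧
    (∀ x ∈ CH.hkerOf CA p, ∀ a : A,
      (TensorProduct.map
          (CH.mul ∘ₗ (TensorProduct.map LinearMap.id (i ∘ₗ p ∘ₗ CH.antipode)) ∘ₗ
            CH.comul) p) (CH.comul (CH.mul (x ⊗ₜ[k] i a))) = x ⊗ₜ[k] a) := by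

  have hg0 : CH.mul ∘ₗ (TensorProduct.map LinearMap.id (i ∘ₗ p ∘ₗ CH.antipode))
      ∘ₗ CH.comul = g0q CA CH p i := g0_eq CA CH p i hp
  -- Goal 2
  have goal2 : ∀ x : HH,
      (CH.mul ∘ₗ (TensorProduct.map LinearMap.id (i ∘ₗ p ∘ₗ CH.antipode))
        ∘ₗ CH.comul) x ∈ CH.hkerOf CA p := by
    intro x
    rw [hg0, mem_hker CA CH p]
    exact goal2' CA CH p i hp hi hpi x
  -- Goal 3
  have goal3 : ∀ x : HH,
      (CH.mul ∘ₗ TensorProduct.map LinearMap.id i)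
        ((TensorProduct.map
            (CH.mul ∘ₗ (TensorProduct.map LinearMap.id (i ∘ₗ p ∘ₗ CH.antipode)) ∘ₗ
              CH.comul) p) (CH.comul x)) = x := by
    intro x
    rw [hg0]
    simp only [LinearMap.comp_apply]
    have c : TensorProduct.map (LinearMap.id : HH →ₗ[k] HH) i
          ∘ₗ TensorProduct.map (g0q CA CH p i) p
        = TensorProduct.map (g0q CA CH p i) (i ∘ₗ p) := by
      apply TensorProduct.ext'; intro u v; simp
    have c' := LinearMap.congr_fun c (CH.comul x)
    simp only [LinearMap.comp_apply] at c'
    rw [c']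
    have := LinearMap.congr_fun (goal3' CA CH p i hp hi hpi) x
    simpa only [LinearMap.comp_apply, LinearMap.id_coe, id_eq] using this
  -- Goal 4
  have goal4 : ∀ x ∈ CH.hkerOf CA p, ∀ a : A,
      (TensorProduct.map
          (CH.mul ∘ₗ (TensorProduct.map LinearMap.id (i ∘ₗ p ∘ₗ CH.antipode)) ∘ₗ
            CH.comul) p) (CH.comul (CH.mul (x ⊗ₜ[k] i a))) = x ⊗ₜ[k] a := by
    intro x hx a
    rw [hg0]
    exact goal4' CA CH p i hφ hp hi hpi x ((mem_hker CA CH p x).mp hx) a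
  -- Goal 1 : bijectivity
  refine ⟨?_, goal2, goal3, goal4⟩
  set Hk := CH.hkerOf CA p with hHk
  set F : Hk ⊗[k] A →ₗ[k] HH := CH.mul ∘ₗ TensorProduct.map Hk.subtype i with hF
  have hmemg : ∀ x : HH, g0q CA CH p i x ∈ Hk := by
    intro x
    rw [hHk, mem_hker CA CH p]
    exact goal2' CA CH p i hp hi hpi x
  set gres : HH →ₗ[k] Hk := LinearMap.codRestrict Hk (g0q CA CH p i) hmemg with hgres
  have hsub : Hk.subtype ∘ₗ gres = g0q CA CH p i := by
    apply LinearMap.ext; intro x; rfl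
  set Gmap : HH →ₗ[k] Hk ⊗[k] A := (TensorProduct.map gres p) ∘ₗ CH.comul with hGmap
  have hFG : ∀ x : HH, F (Gmap x) = x := by
    intro x
    have c : TensorProduct.map Hk.subtype i ∘ₗ TensorProduct.map gres p
        = TensorProduct.map (g0q CA CH p i) (i ∘ₗ p) := by
      rw [← TensorProduct.map_comp, hsub]
    have c' := LinearMap.congr_fun c (CH.comul x)
    simp only [LinearMap.comp_apply] at c'
    simp only [hF, hGmap, LinearMap.comp_apply]
    rw [c']
    have := LinearMap.congr_fun (goal3' CA CH p i hp hi hpi) x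
    simpa only [LinearMap.comp_apply, LinearMap.id_coe, id_eq] using this
  have hGF : ∀ t : Hk ⊗[k] A, Gmap (F t) = t := by
    have hinj : Function.Injective
        (TensorProduct.map Hk.subtype (LinearMap.id : A →ₗ[k] A)) := by
      have := Module.Flat.rTensor_preserves_injective_linearMap (M := A)
        Hk.subtype (Submodule.injective_subtype Hk)
      exact this
    have key : (TensorProduct.map Hk.subtype (LinearMap.id : A →ₗ[k] A))
          ∘ₗ (Gmap ∘ₗ F)
        = TensorProduct.map Hk.subtype (LinearMap.id : A →ₗ[k] A) := by
      apply TensorProduct.ext'; intro xk a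
      simp only [LinearMap.comp_apply, hF, hGmap, TensorProduct.map_tmul,
        LinearMap.id_coe, id_eq, Submodule.coe_subtype]
      have c : TensorProduct.map Hk.subtype (LinearMap.id : A →ₗ[k] A)
            ∘ₗ TensorProduct.map gres p = TensorProduct.map (g0q CA CH p i) p := by
        rw [← TensorProduct.map_comp, hsub, LinearMap.id_comp]
      have c' := LinearMap.congr_fun c (CH.comul (CH.mul ((xk : HH) ⊗ₜ[k] i a)))
      simp only [LinearMap.comp_apply] at c'
      rw [c']
      exact goal4' CA CH p i hφ hp hi hpi (xk : HH)
        ((mem_hker CA CH p (xk : HH)).mp xk.2) a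
    intro t
    apply hinj
    have := LinearMap.congr_fun key t
    simpa only [LinearMap.comp_apply] using this
  constructor
  · intro t₁ t₂ h
    rw [← hGF t₁, ← hGF t₂, h]
  · intro y
    exact ⟨Gmap y, hFG y⟩


end Statements

end ColorHopfPaper
end

section
/- Let A, B, C be cocommutative color Hopf algebras and f: A → C, g: B → C morphisms of color Hopf algebras. Then the pullback of f and g in the category of cocommutative color Hopf algebras is A ×_C B = {a ⊗ b ∈ A ⊗ B : a₁ ⊗ f(a₂) ⊗ b = a ⊗ g(b₁) ⊗ b₂}, with projections induced by π_A(a⊗b) = a ε(b) and π_B(a⊗b) = ε(a) b. -/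
open TensorProduct

namespace ColorHopfPaper

variable (k : Type*) [Field k] (G : Type*) [CommGroup G]

section Statements

variable {A B CC : Type*} [AddCommGroup A] [Module k A] [AddCommGroup B] [Module k B]
  [AddCommGroup CC] [Module k CC]


section AuxLemmas

variable {k G}
variable {H : Type*} [AddCommGroup H] [Module k H]

/-- Generic "middle contraction" identity used below. -/
lemma aux_kmi (c : H ⊗[k] H →ₗ[k] H ⊗[k] H) (e : H →ₗ[k] k) :
    ((TensorProduct.lid k k).toLinearMap ∘ₗ
      TensorProduct.map ((TensorProduct.lid k k).toLinearMap ∘ₗ TensorProduct.map e e)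
        ((TensorProduct.lid k k).toLinearMap ∘ₗ TensorProduct.map e e)) ∘ₗ midMap k c
    = (((TensorProduct.lid k k).toLinearMap ∘ₗ TensorProduct.map e e) ∘ₗ c) ∘ₗ
      TensorProduct.map ((TensorProduct.lid k H).toLinearMap ∘ₗ TensorProduct.map e LinearMap.id)
        ((TensorProduct.rid k H).toLinearMap ∘ₗ TensorProduct.map LinearMap.id e) := by
  apply TensorProduct.ext_fourfold'
  intro p q r s
  have L : ∀ t : H ⊗[k] H,
      (TensorProduct.lid k k) ((TensorProduct.map
          ((TensorProduct.lid k k).toLinearMap ∘ₗ TensorProduct.map e e)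
          ((TensorProduct.lid k k).toLinearMap ∘ₗ TensorProduct.map e e))
        ((TensorProduct.assoc k H H (H ⊗[k] H)).symm
          (p ⊗ₜ[k] (TensorProduct.assoc k H H H) (t ⊗ₜ[k] s))))
      = e p * e s * (TensorProduct.lid k k) ((TensorProduct.map e e) t) := by
    intro t
    induction t using TensorProduct.induction_on with
    | zero => simp
    | tmul X Y =>
        simp only [assoc_tmul, assoc_symm_tmul, map_tmul, lid_tmul, LinearMap.comp_apply,
          LinearEquiv.coe_coe, smul_eq_mul]
        ring
    | add x y hx hy =>
        simp only [add_tmul, tmul_add, map_add, LinearEquiv.map_add, hx, hy]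
        ring
  simp only [LinearMap.comp_apply, midMap, map_tmul, lid_tmul, rid_tmul,
    LinearEquiv.coe_coe, LinearMap.id_apply, assoc_tmul, assoc_symm_tmul]
  rw [L (c (q ⊗ₜ[k] r))]
  rw [show ((e p • q) ⊗ₜ[k] (e s • r) : H ⊗[k] H) = (e s * e p) • (q ⊗ₜ[k] r) by
    rw [tmul_smul, ← smul_tmul', smul_smul]]
  simp only [map_smul, LinearMap.map_smul, LinearEquiv.map_smul, smul_eq_mul]
  ring

lemma aux_counit_mul_eq (C : ColorHopfAlg k G H) :
    C.counit ∘ₗ C.mul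
      = (TensorProduct.lid k k).toLinearMap ∘ₗ TensorProduct.map C.counit C.counit :=
  TensorProduct.ext' fun x y => by
    simp [C.counit_mul x y]

lemma aux_e1_comul (C : ColorHopfAlg k G H) :
    ((TensorProduct.lid k H).toLinearMap ∘ₗ TensorProduct.map C.counit LinearMap.id) ∘ₗ
      C.comul = LinearMap.id :=
  LinearMap.ext fun x => by
    simpa using C.counit_left x

lemma aux_e2_comul (C : ColorHopfAlg k G H) :
    ((TensorProduct.rid k H).toLinearMap ∘ₗ TensorProduct.map LinearMap.id C.counit) ∘ₗ
      C.comul = LinearMap.id :=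
  LinearMap.ext fun x => by
    simpa using C.counit_right x

lemma aux_lam_comul (C : ColorHopfAlg k G H) :
    ((TensorProduct.lid k k).toLinearMap ∘ₗ TensorProduct.map C.counit C.counit) ∘ₗ
      C.comul = C.counit := by
  have h : ((TensorProduct.lid k k).toLinearMap ∘ₗ TensorProduct.map C.counit C.counit)
      = C.counit ∘ₗ
        ((TensorProduct.lid k H).toLinearMap ∘ₗ TensorProduct.map C.counit LinearMap.id) :=
    TensorProduct.ext' fun x y => by simp
  rw [h, LinearMap.comp_assoc, aux_e1_comul C, LinearMap.comp_id]

/-- The key consequence of the bialgebra axioms: the counit "eats" the braiding. -/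
lemma aux_counit_braid (C : ColorHopfAlg k G H) :
    ((TensorProduct.lid k k).toLinearMap ∘ₗ TensorProduct.map C.counit C.counit) ∘ₗ C.braid
      = (TensorProduct.lid k k).toLinearMap ∘ₗ TensorProduct.map C.counit C.counit := by
  have h1 : C.counit ∘ₗ C.mul
      = (TensorProduct.lid k k).toLinearMap ∘ₗ TensorProduct.map C.counit C.counit :=
    aux_counit_mul_eq C
  have hs : ((TensorProduct.lid k k).toLinearMap ∘ₗ TensorProduct.map C.counit C.counit) ∘ₗ
      TensorProduct.map C.mul C.mul
      = (TensorProduct.lid k k).toLinearMap ∘ₗ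
        TensorProduct.map
          ((TensorProduct.lid k k).toLinearMap ∘ₗ TensorProduct.map C.counit C.counit)
          ((TensorProduct.lid k k).toLinearMap ∘ₗ TensorProduct.map C.counit C.counit) := by
    rw [LinearMap.comp_assoc, ← TensorProduct.map_comp, h1]
  conv_rhs => rw [← h1, ← aux_lam_comul C, LinearMap.comp_assoc, C.comul_mul]
  simp only [← LinearMap.comp_assoc]
  rw [hs, aux_kmi C.braid C.counit,
    LinearMap.comp_assoc (TensorProduct.map C.comul C.comul), ← TensorProduct.map_comp,
    aux_e1_comul C, aux_e2_comul C, TensorProduct.map_id, LinearMap.comp_id]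

lemma aux_phi_counit (C : ColorHopfAlg k G H) {g h : G} {x y : H}
    (hx : x ∈ C.grade g) (hy : y ∈ C.grade h) :
    C.φ g h * (C.counit y * C.counit x) = C.counit x * C.counit y := by
  have hb := LinearMap.congr_fun (aux_counit_braid C) (x ⊗ₜ[k] y)
  rw [LinearMap.comp_apply, LinearMap.comp_apply, C.braid_apply g h x y hx hy] at hb
  simpa [smul_eq_mul, mul_assoc] using hb

lemma aux_mem_span_homog (C : ColorHopfAlg k G H) (x : H) :
    x ∈ Submodule.span k {y : H | ∃ g : G, y ∈ C.grade g} := by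
  have hle : (⊤ : Submodule k H) ≤ Submodule.span k {y : H | ∃ g : G, y ∈ C.grade g} := by
    rw [← C.grade_top]
    exact iSup_le fun g y hy => Submodule.subset_span ⟨g, hy⟩
  exact hle trivial

end AuxLemmas

section AuxTwo

variable {k G}
variable {A B CC : Type*} [AddCommGroup A] [Module k A] [AddCommGroup B] [Module k B]
  [AddCommGroup CC] [Module k CC]

/-- The mixed counit/braiding identity, transported through `f` and `g`. -/
lemma aux_kappa (CA : ColorHopfAlg k G A) (CB : ColorHopfAlg k G B)
    (CCc : ColorHopfAlg k G CC) (hφC : CCc.φ = CA.φ)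
    (f : A →ₗ[k] CC) (g : B →ₗ[k] CC)
    (hf : IsColorHom k G CA CCc f) (hg : IsColorHom k G CB CCc g)
    (cAB : A ⊗[k] B →ₗ[k] B ⊗[k] A)
    (hcAB : ∀ (gg hh : G) (x : A) (y : B), x ∈ CA.grade gg → y ∈ CB.grade hh →
      cAB (x ⊗ₜ[k] y) = CA.φ gg hh • (y ⊗ₜ[k] x)) :
    (TensorProduct.lid k k).toLinearMap ∘ₗ TensorProduct.map CB.counit CA.counit ∘ₗ cAB
      = (TensorProduct.lid k k).toLinearMap ∘ₗ TensorProduct.map CA.counit CB.counit := by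
  apply TensorProduct.ext'
  intro x y
  induction aux_mem_span_homog CA x using Submodule.span_induction with
  | mem x hx =>
    induction aux_mem_span_homog CB y using Submodule.span_induction with
    | mem y hy =>
      obtain ⟨gx, hgx⟩ := hx
      obtain ⟨gy, hgy⟩ := hy
      have key := aux_phi_counit CCc (hf.map_grade gx x hgx) (hg.map_grade gy y hgy)
      rw [hφC] at key
      have hfc : CCc.counit (f x) = CA.counit x := by
        simpa using LinearMap.congr_fun hf.map_counit x
      have hgc : CCc.counit (g y) = CB.counit y := by
        simpa using LinearMap.congr_fun hg.map_counit y
      rw [hfc, hgc] at key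
      simp only [LinearMap.comp_apply, hcAB gx gy x y hgx hgy, map_smul,
        LinearEquiv.map_smul, map_tmul, LinearEquiv.coe_coe, lid_tmul, smul_eq_mul]
      rw [← key]
    | zero => simp
    | add y₁ y₂ hy₁ hy₂ ih₁ ih₂ => simp only [LinearMap.comp_apply, tmul_add, map_add,
        LinearEquiv.map_add] at ih₁ ih₂ ⊢; rw [ih₁, ih₂]
    | smul a y hy ih => simp only [LinearMap.comp_apply, tmul_smul, map_smul,
        LinearMap.map_smul, LinearEquiv.map_smul] at ih ⊢; rw [ih]
  | zero => simp
  | add x₁ x₂ hx₁ hx₂ ih₁ ih₂ => simp only [LinearMap.comp_apply, add_tmul, map_add,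
      LinearEquiv.map_add] at ih₁ ih₂ ⊢; rw [ih₁, ih₂]
  | smul a x hx ih =>
      rw [show ((a • x) ⊗ₜ[k] y : A ⊗[k] B) = a • (x ⊗ₜ[k] y) from (smul_tmul' a x y).symm]
      simp only [LinearMap.comp_apply, map_smul, LinearMap.map_smul,
        LinearEquiv.map_smul] at ih ⊢
      rw [ih]

/-- Projections compose with the twisted comultiplication of `A ⊗ B` to the identity. -/
lemma aux_proj_id (CA : ColorHopfAlg k G A) (CB : ColorHopfAlg k G B)
    (cAB : A ⊗[k] B →ₗ[k] B ⊗[k] A)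
    (hκ : (TensorProduct.lid k k).toLinearMap ∘ₗ TensorProduct.map CB.counit CA.counit ∘ₗ cAB
      = (TensorProduct.lid k k).toLinearMap ∘ₗ TensorProduct.map CA.counit CB.counit) :
    (TensorProduct.map
        ((TensorProduct.rid k A).toLinearMap ∘ₗ TensorProduct.map LinearMap.id CB.counit)
        ((TensorProduct.lid k B).toLinearMap ∘ₗ TensorProduct.map CA.counit LinearMap.id)) ∘ₗ
      midMap k cAB ∘ₗ TensorProduct.map CA.comul CB.comul = LinearMap.id := by
  have step1 : (TensorProduct.map
        ((TensorProduct.rid k A).toLinearMap ∘ₗ TensorProduct.map LinearMap.id CB.counit)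
        ((TensorProduct.lid k B).toLinearMap ∘ₗ TensorProduct.map CA.counit LinearMap.id)) ∘ₗ
      midMap k cAB
      = TensorProduct.map
          ((TensorProduct.rid k A).toLinearMap ∘ₗ TensorProduct.map LinearMap.id CA.counit)
          ((TensorProduct.lid k B).toLinearMap ∘ₗ TensorProduct.map CB.counit LinearMap.id) := by
    apply TensorProduct.ext_fourfold'
    intro p q r s
    have L : ∀ t : B ⊗[k] A,
        (TensorProduct.map
          ((TensorProduct.rid k A).toLinearMap ∘ₗ TensorProduct.map LinearMap.id CB.counit)
          ((TensorProduct.lid k B).toLinearMap ∘ₗ TensorProduct.map CA.counit LinearMap.id))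
          ((TensorProduct.assoc k A B (A ⊗[k] B)).symm
            (p ⊗ₜ[k] (TensorProduct.assoc k B A B) (t ⊗ₜ[k] s)))
        = ((TensorProduct.lid k k) ((TensorProduct.map CB.counit CA.counit) t)) •
            (p ⊗ₜ[k] s) := by
      intro t
      induction t using TensorProduct.induction_on with
      | zero => simp
      | tmul X Y =>
          simp only [assoc_tmul, assoc_symm_tmul, map_tmul, lid_tmul, rid_tmul,
            LinearMap.comp_apply, LinearEquiv.coe_coe, LinearMap.id_apply, smul_eq_mul]
          rw [tmul_smul, smul_tmul', smul_smul, mul_comm, smul_tmul']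
      | add t₁ t₂ h₁ h₂ =>
          simp only [add_tmul, tmul_add, map_add, LinearEquiv.map_add, h₁, h₂, add_smul]
    simp only [LinearMap.comp_apply, midMap, map_tmul, lid_tmul, rid_tmul,
      LinearEquiv.coe_coe, LinearMap.id_apply, assoc_tmul, assoc_symm_tmul]
    rw [L (cAB (q ⊗ₜ[k] r))]
    rw [show (TensorProduct.lid k k) ((TensorProduct.map CB.counit CA.counit) (cAB (q ⊗ₜ[k] r)))
        = (TensorProduct.lid k k) ((TensorProduct.map CA.counit CB.counit) (q ⊗ₜ[k] r)) from
      LinearMap.congr_fun hκ (q ⊗ₜ[k] r)]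
    simp only [map_tmul, lid_tmul, smul_eq_mul]
    rw [tmul_smul, smul_tmul', smul_tmul', smul_smul, mul_comm]
  rw [← LinearMap.comp_assoc, step1, ← TensorProduct.map_comp,
    aux_e2_comul CA, aux_e1_comul CB, TensorProduct.map_id]

end AuxTwo

/-- the pullback of `f : A → C` and `g : B → C` in the category of
cocommutative color Hopf algebras is
`A ×_C B = {t ∈ A ⊗ B : a₁ ⊗ f(a₂) ⊗ b = a ⊗ g(b₁) ⊗ b₂}` with projections induced by
`π_A(a⊗b) = a ε(b)`, `π_B(a⊗b) = ε(a) b` (universal property among morphisms of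
cocommutative color Hopf algebras). -/
theorem pullback_description (CA : ColorHopfAlg k G A) (CB : ColorHopfAlg k G B)
    (CCc : ColorHopfAlg k G CC) (hφB : CB.φ = CA.φ) (hφC : CCc.φ = CA.φ)
    (f : A →ₗ[k] CC) (g : B →ₗ[k] CC)
    (hf : IsColorHom k G CA CCc f) (hg : IsColorHom k G CB CCc g)
    (cAB : A ⊗[k] B →ₗ[k] B ⊗[k] A)
    (hcAB : ∀ (gg hh : G) (x : A) (y : B), x ∈ CA.grade gg → y ∈ CB.grade hh →
      cAB (x ⊗ₜ[k] y) = CA.φ gg hh • (y ⊗ₜ[k] x)) :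
    (∀ t ∈ LinearMap.ker
        ((TensorProduct.map ((TensorProduct.map LinearMap.id f) ∘ₗ CA.comul)
            (LinearMap.id : B →ₗ[k] B)) -
          ((TensorProduct.assoc k A CC B).symm.toLinearMap ∘ₗ
            TensorProduct.map LinearMap.id
              ((TensorProduct.map g LinearMap.id) ∘ₗ CB.comul))),
      f (((TensorProduct.rid k A).toLinearMap ∘ₗ
            TensorProduct.map LinearMap.id CB.counit) t) =
        g (((TensorProduct.lid k B).toLinearMap ∘ₗ
            TensorProduct.map CA.counit LinearMap.id) t)) ∧
    (∀ (D : Type*) [AddCommGroup D] [Module k D], ∀ (CD : ColorHopfAlg k G D)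
      (u : D →ₗ[k] A) (v : D →ₗ[k] B), IsColorHom k G CD CA u →
      IsColorHom k G CD CB v → f ∘ₗ u = g ∘ₗ v →
      (∀ dd : D, (TensorProduct.map u v) (CD.comul dd) ∈ LinearMap.ker
        ((TensorProduct.map ((TensorProduct.map LinearMap.id f) ∘ₗ CA.comul)
            (LinearMap.id : B →ₗ[k] B)) -
          ((TensorProduct.assoc k A CC B).symm.toLinearMap ∘ₗ
            TensorProduct.map LinearMap.id
              ((TensorProduct.map g LinearMap.id) ∘ₗ CB.comul)))) ∧
      (∀ dd : D, ((TensorProduct.rid k A).toLinearMap ∘ₗ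
          TensorProduct.map LinearMap.id CB.counit)
            ((TensorProduct.map u v) (CD.comul dd)) = u dd) ∧
      (∀ dd : D, ((TensorProduct.lid k B).toLinearMap ∘ₗ
          TensorProduct.map CA.counit LinearMap.id)
            ((TensorProduct.map u v) (CD.comul dd)) = v dd) ∧
      (∀ wm : D →ₗ[k] A ⊗[k] B,
        ((midMap k cAB ∘ₗ TensorProduct.map CA.comul CB.comul) ∘ₗ wm =
          (TensorProduct.map wm wm) ∘ₗ CD.comul) →
        ((TensorProduct.rid k A).toLinearMap ∘ₗ
          TensorProduct.map LinearMap.id CB.counit) ∘ₗ wm = u →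
        ((TensorProduct.lid k B).toLinearMap ∘ₗ
          TensorProduct.map CA.counit LinearMap.id) ∘ₗ wm = v →
        wm = (TensorProduct.map u v) ∘ₗ CD.comul)) := by
  constructor
  · -- compatibility on the equalizer
    intro t ht
    rw [LinearMap.mem_ker, LinearMap.sub_apply, sub_eq_zero] at ht
    -- the "total counit" functional L : (A ⊗ CC) ⊗ B → CC
    set L : (A ⊗[k] CC) ⊗[k] B →ₗ[k] CC :=
      (TensorProduct.rid k CC).toLinearMap ∘ₗ
        TensorProduct.map
          ((TensorProduct.lid k CC).toLinearMap ∘ₗ TensorProduct.map CA.counit LinearMap.id)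
          CB.counit with hL
    have claim1 : L ∘ₗ (TensorProduct.map ((TensorProduct.map LinearMap.id f) ∘ₗ CA.comul)
        (LinearMap.id : B →ₗ[k] B))
        = f ∘ₗ ((TensorProduct.rid k A).toLinearMap ∘ₗ
            TensorProduct.map LinearMap.id CB.counit) := by
      apply TensorProduct.ext'
      intro a b
      have inner : ∀ ta : A ⊗[k] A,
          L (((TensorProduct.map LinearMap.id f) ta) ⊗ₜ[k] b)
            = CB.counit b •
              f ((TensorProduct.lid k A) ((TensorProduct.map CA.counit LinearMap.id) ta)) := by
        intro ta
        induction ta using TensorProduct.induction_on with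
        | zero => simp [hL]
        | tmul p q =>
            simp only [hL, map_tmul, LinearMap.comp_apply, LinearEquiv.coe_coe,
              LinearMap.id_apply, lid_tmul, rid_tmul, map_smul, LinearMap.map_smul,
              LinearEquiv.map_smul]
        | add t₁ t₂ h₁ h₂ =>
            simp only [map_add, add_tmul, LinearEquiv.map_add, LinearMap.map_add, h₁, h₂,
              smul_add]
      simp only [LinearMap.comp_apply, map_tmul, LinearMap.id_apply]
      rw [inner (CA.comul a), CA.counit_left a]
      simp
    have claim2 : L ∘ₗ ((TensorProduct.assoc k A CC B).symm.toLinearMap ∘ₗ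
        TensorProduct.map LinearMap.id ((TensorProduct.map g LinearMap.id) ∘ₗ CB.comul))
        = g ∘ₗ ((TensorProduct.lid k B).toLinearMap ∘ₗ
            TensorProduct.map CA.counit LinearMap.id) := by
      apply TensorProduct.ext'
      intro a b
      have inner : ∀ tb : B ⊗[k] B,
          L ((TensorProduct.assoc k A CC B).symm
              (a ⊗ₜ[k] (TensorProduct.map g LinearMap.id) tb))
            = CA.counit a •
              g ((TensorProduct.rid k B) ((TensorProduct.map LinearMap.id CB.counit) tb)) := by
        intro tb
        induction tb using TensorProduct.induction_on with
        | zero => simp [hL]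
        | tmul r s' =>
            simp only [hL, map_tmul, LinearMap.comp_apply, LinearEquiv.coe_coe,
              LinearMap.id_apply, lid_tmul, rid_tmul, assoc_symm_tmul, map_smul,
              LinearMap.map_smul, LinearEquiv.map_smul]
            rw [smul_comm]
        | add t₁ t₂ h₁ h₂ =>
            simp only [map_add, tmul_add, LinearEquiv.map_add, LinearMap.map_add, h₁, h₂,
              smul_add]
      simp only [LinearMap.comp_apply, map_tmul, LinearMap.id_apply, LinearEquiv.coe_coe]
      rw [inner (CB.comul b), CB.counit_right b]
      simp
    calc f (((TensorProduct.rid k A).toLinearMap ∘ₗ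
          TensorProduct.map LinearMap.id CB.counit) t)
        = (L ∘ₗ (TensorProduct.map ((TensorProduct.map LinearMap.id f) ∘ₗ CA.comul)
            (LinearMap.id : B →ₗ[k] B))) t := (LinearMap.congr_fun claim1 t).symm
      _ = (L ∘ₗ ((TensorProduct.assoc k A CC B).symm.toLinearMap ∘ₗ
            TensorProduct.map LinearMap.id ((TensorProduct.map g LinearMap.id) ∘ₗ CB.comul))) t
          := by simp only [LinearMap.comp_apply] at ht ⊢; rw [ht]
      _ = g (((TensorProduct.lid k B).toLinearMap ∘ₗ
            TensorProduct.map CA.counit LinearMap.id) t) := LinearMap.congr_fun claim2 t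
  · -- universal property
    intro D _ _ CD u v hu hv hfg
    have hproj : (TensorProduct.map
          ((TensorProduct.rid k A).toLinearMap ∘ₗ TensorProduct.map LinearMap.id CB.counit)
          ((TensorProduct.lid k B).toLinearMap ∘ₗ
            TensorProduct.map CA.counit LinearMap.id)) ∘ₗ
        midMap k cAB ∘ₗ TensorProduct.map CA.comul CB.comul = LinearMap.id :=
      aux_proj_id CA CB cAB (aux_kappa CA CB CCc hφC f g hf hg cAB hcAB)
    refine ⟨?_, ?_, ?_, ?_⟩
    · -- membership in the kernel
      intro dd
      rw [LinearMap.mem_ker, LinearMap.sub_apply, sub_eq_zero]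
      have hmap : (TensorProduct.map ((TensorProduct.map LinearMap.id f) ∘ₗ CA.comul)
            (LinearMap.id : B →ₗ[k] B)) ∘ₗ (TensorProduct.map u v) ∘ₗ CD.comul
          = ((TensorProduct.assoc k A CC B).symm.toLinearMap ∘ₗ
              TensorProduct.map LinearMap.id
                ((TensorProduct.map g LinearMap.id) ∘ₗ CB.comul)) ∘ₗ
            (TensorProduct.map u v) ∘ₗ CD.comul := by
        have hPu : ((TensorProduct.map LinearMap.id f) ∘ₗ CA.comul) ∘ₗ u
            = (TensorProduct.map u (f ∘ₗ u)) ∘ₗ CD.comul := by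
          rw [LinearMap.comp_assoc, hu.map_comul, ← LinearMap.comp_assoc,
            ← TensorProduct.map_comp, LinearMap.id_comp]
        have hQv : ((TensorProduct.map g LinearMap.id) ∘ₗ CB.comul) ∘ₗ v
            = (TensorProduct.map (g ∘ₗ v) v) ∘ₗ CD.comul := by
          rw [LinearMap.comp_assoc, hv.map_comul, ← LinearMap.comp_assoc,
            ← TensorProduct.map_comp, LinearMap.id_comp]
        have lhs_eq : (TensorProduct.map ((TensorProduct.map LinearMap.id f) ∘ₗ CA.comul)
              (LinearMap.id : B →ₗ[k] B)) ∘ₗ (TensorProduct.map u v) ∘ₗ CD.comul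
            = (TensorProduct.map (TensorProduct.map u (f ∘ₗ u)) v) ∘ₗ
                (TensorProduct.map CD.comul LinearMap.id) ∘ₗ CD.comul := by
          rw [← LinearMap.comp_assoc, ← TensorProduct.map_comp, LinearMap.id_comp, hPu]
          rw [show TensorProduct.map ((TensorProduct.map u (f ∘ₗ u)) ∘ₗ CD.comul) v
              = TensorProduct.map (TensorProduct.map u (f ∘ₗ u)) v ∘ₗ
                TensorProduct.map CD.comul LinearMap.id from by
            rw [← TensorProduct.map_comp, LinearMap.comp_id]]
          rw [LinearMap.comp_assoc]
        have rhs_eq : ((TensorProduct.assoc k A CC B).symm.toLinearMap ∘ₗ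
              TensorProduct.map LinearMap.id
                ((TensorProduct.map g LinearMap.id) ∘ₗ CB.comul)) ∘ₗ
              (TensorProduct.map u v) ∘ₗ CD.comul
            = (TensorProduct.map (TensorProduct.map u (g ∘ₗ v)) v) ∘ₗ
                (TensorProduct.map CD.comul LinearMap.id) ∘ₗ CD.comul := by
          have e1 : (TensorProduct.map LinearMap.id
                ((TensorProduct.map g LinearMap.id) ∘ₗ CB.comul)) ∘ₗ
                (TensorProduct.map u v)
              = (TensorProduct.map u (TensorProduct.map (g ∘ₗ v) v)) ∘ₗ
                (TensorProduct.map LinearMap.id CD.comul) := by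
            rw [← TensorProduct.map_comp, LinearMap.id_comp, hQv]
            rw [show TensorProduct.map u ((TensorProduct.map (g ∘ₗ v) v) ∘ₗ CD.comul)
                = TensorProduct.map u (TensorProduct.map (g ∘ₗ v) v) ∘ₗ
                  TensorProduct.map LinearMap.id CD.comul from by
              rw [← TensorProduct.map_comp, LinearMap.comp_id]]
          have e2 : (TensorProduct.map LinearMap.id CD.comul) ∘ₗ CD.comul
              = (TensorProduct.assoc k D D D).toLinearMap ∘ₗ
                  (TensorProduct.map CD.comul LinearMap.id) ∘ₗ CD.comul := CD.coassoc.symm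
          have e3 : (TensorProduct.map u (TensorProduct.map (g ∘ₗ v) v)) ∘ₗ
                (TensorProduct.assoc k D D D).toLinearMap
              = (TensorProduct.assoc k A CC B).toLinearMap ∘ₗ
                  (TensorProduct.map (TensorProduct.map u (g ∘ₗ v)) v) :=
            TensorProduct.map_map_comp_assoc_eq u (g ∘ₗ v) v
          have e4 : (TensorProduct.assoc k A CC B).symm.toLinearMap ∘ₗ
                (TensorProduct.assoc k A CC B).toLinearMap ∘ₗ
                (TensorProduct.map (TensorProduct.map u (g ∘ₗ v)) v)
              = TensorProduct.map (TensorProduct.map u (g ∘ₗ v)) v :=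
            LinearMap.ext fun z => by simp
          calc ((TensorProduct.assoc k A CC B).symm.toLinearMap ∘ₗ
                TensorProduct.map LinearMap.id
                  ((TensorProduct.map g LinearMap.id) ∘ₗ CB.comul)) ∘ₗ
                (TensorProduct.map u v) ∘ₗ CD.comul
              = (TensorProduct.assoc k A CC B).symm.toLinearMap ∘ₗ
                  ((TensorProduct.map u (TensorProduct.map (g ∘ₗ v) v)) ∘ₗ
                    (TensorProduct.map LinearMap.id CD.comul)) ∘ₗ CD.comul := by
                rw [LinearMap.comp_assoc]
                rw [← LinearMap.comp_assoc (CD.comul) (TensorProduct.map u v)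
                  (TensorProduct.map LinearMap.id
                    ((TensorProduct.map g LinearMap.id) ∘ₗ CB.comul))]
                rw [e1, LinearMap.comp_assoc]
            _ = (TensorProduct.assoc k A CC B).symm.toLinearMap ∘ₗ
                  (TensorProduct.map u (TensorProduct.map (g ∘ₗ v) v)) ∘ₗ
                  ((TensorProduct.map LinearMap.id CD.comul) ∘ₗ CD.comul) := by
                rw [LinearMap.comp_assoc]
            _ = (TensorProduct.assoc k A CC B).symm.toLinearMap ∘ₗ
                  ((TensorProduct.map u (TensorProduct.map (g ∘ₗ v) v)) ∘ₗ
                    (TensorProduct.assoc k D D D).toLinearMap) ∘ₗ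
                  (TensorProduct.map CD.comul LinearMap.id) ∘ₗ CD.comul := by
                rw [e2]
                simp only [LinearMap.comp_assoc]
            _ = ((TensorProduct.assoc k A CC B).symm.toLinearMap ∘ₗ
                  (TensorProduct.assoc k A CC B).toLinearMap ∘ₗ
                  (TensorProduct.map (TensorProduct.map u (g ∘ₗ v)) v)) ∘ₗ
                  (TensorProduct.map CD.comul LinearMap.id) ∘ₗ CD.comul := by
                rw [e3]
                simp only [LinearMap.comp_assoc]
            _ = (TensorProduct.map (TensorProduct.map u (g ∘ₗ v)) v) ∘ₗ
                  (TensorProduct.map CD.comul LinearMap.id) ∘ₗ CD.comul := by rw [e4]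
        rw [lhs_eq, rhs_eq, hfg]
      exact LinearMap.congr_fun hmap dd
    · -- first projection
      intro dd
      have h : ((TensorProduct.rid k A).toLinearMap ∘ₗ
            TensorProduct.map LinearMap.id CB.counit) ∘ₗ (TensorProduct.map u v)
          = u ∘ₗ ((TensorProduct.rid k D).toLinearMap ∘ₗ
              TensorProduct.map LinearMap.id CD.counit) := by
        apply TensorProduct.ext'
        intro d₁ d₂
        have hvc : CB.counit (v d₂) = CD.counit d₂ := by
          simpa using LinearMap.congr_fun hv.map_counit d₂
        simp [hvc]
      have := LinearMap.congr_fun h (CD.comul dd)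
      simp only [LinearMap.comp_apply] at this ⊢
      rw [this]
      exact congrArg u (CD.counit_right dd)
    · -- second projection
      intro dd
      have h : ((TensorProduct.lid k B).toLinearMap ∘ₗ
            TensorProduct.map CA.counit LinearMap.id) ∘ₗ (TensorProduct.map u v)
          = v ∘ₗ ((TensorProduct.lid k D).toLinearMap ∘ₗ
              TensorProduct.map CD.counit LinearMap.id) := by
        apply TensorProduct.ext'
        intro d₁ d₂
        have huc : CA.counit (u d₁) = CD.counit d₁ := by
          simpa using LinearMap.congr_fun hu.map_counit d₁
        simp [huc]
      have := LinearMap.congr_fun h (CD.comul dd)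
      simp only [LinearMap.comp_apply] at this ⊢
      rw [this]
      exact congrArg v (CD.counit_left dd)
    · -- uniqueness
      intro wm hw hwu hwv
      have : TensorProduct.map u v ∘ₗ CD.comul = wm := by
        calc TensorProduct.map u v ∘ₗ CD.comul
            = TensorProduct.map
                (((TensorProduct.rid k A).toLinearMap ∘ₗ
                  TensorProduct.map LinearMap.id CB.counit) ∘ₗ wm)
                (((TensorProduct.lid k B).toLinearMap ∘ₗ
                  TensorProduct.map CA.counit LinearMap.id) ∘ₗ wm) ∘ₗ CD.comul := by
              rw [hwu, hwv]
          _ = (TensorProduct.map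
                ((TensorProduct.rid k A).toLinearMap ∘ₗ
                  TensorProduct.map LinearMap.id CB.counit)
                ((TensorProduct.lid k B).toLinearMap ∘ₗ
                  TensorProduct.map CA.counit LinearMap.id)) ∘ₗ
              (TensorProduct.map wm wm) ∘ₗ CD.comul := by
              rw [TensorProduct.map_comp, LinearMap.comp_assoc]
          _ = (TensorProduct.map
                ((TensorProduct.rid k A).toLinearMap ∘ₗ
                  TensorProduct.map LinearMap.id CB.counit)
                ((TensorProduct.lid k B).toLinearMap ∘ₗ
                  TensorProduct.map CA.counit LinearMap.id)) ∘ₗ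
              (midMap k cAB ∘ₗ TensorProduct.map CA.comul CB.comul) ∘ₗ wm := by rw [← hw]
          _ = ((TensorProduct.map
                ((TensorProduct.rid k A).toLinearMap ∘ₗ
                  TensorProduct.map LinearMap.id CB.counit)
                ((TensorProduct.lid k B).toLinearMap ∘ₗ
                  TensorProduct.map CA.counit LinearMap.id)) ∘ₗ
              midMap k cAB ∘ₗ TensorProduct.map CA.comul CB.comul) ∘ₗ wm := by
              simp only [LinearMap.comp_assoc]
          _ = wm := by rw [hproj, LinearMap.id_comp]
      exact this.symm

end Statements

end ColorHopfPaper
end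

section
/- Let (A, H, d) be a color Hopf crossed module. Then the map p₁: H ⋊ A → A defined by p₁(h ⊗ a) = d(h) a is a morphism of color Hopf algebras; in particular it is multiplicative: p₁((h⊗a)(h'⊗a')) = d(h) a d(h') a'. -/
open TensorProduct

namespace ColorHopfPaper

variable (k : Type*) [Field k] (G : Type*) [CommGroup G]

section Statements

variable {A H : Type*} [AddCommGroup A] [Module k A] [AddCommGroup H] [Module k H]

section Infra

variable {k G}
variable {X Y Z W : Type*} [AddCommGroup X] [Module k X] [AddCommGroup Y] [Module k Y]
  [AddCommGroup Z] [Module k Z] [AddCommGroup W] [Module k W]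

theorem ext_span {sX : Set X} {sY : Set Y} (hX : Submodule.span k sX = ⊤)
    (hY : Submodule.span k sY = ⊤) {f g : X ⊗[k] Y →ₗ[k] Z}
    (h : ∀ x ∈ sX, ∀ y ∈ sY, f (x ⊗ₜ[k] y) = g (x ⊗ₜ[k] y)) : f = g := by
  apply TensorProduct.ext'
  intro x y
  have hx : x ∈ Submodule.span k sX := hX ▸ Submodule.mem_top
  induction hx using Submodule.span_induction with
  | mem x hxs =>
    have hy : y ∈ Submodule.span k sY := hY ▸ Submodule.mem_top
    induction hy using Submodule.span_induction with
    | mem y hys => exact h x hxs y hys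
    | zero => rw [TensorProduct.tmul_zero, map_zero, map_zero]
    | add a b _ _ ha hb => rw [TensorProduct.tmul_add, map_add, map_add, ha, hb]
    | smul r a _ ha => rw [TensorProduct.tmul_smul, map_smul, map_smul, ha]
  | zero => rw [TensorProduct.zero_tmul, map_zero, map_zero]
  | add a b _ _ ha hb => rw [TensorProduct.add_tmul, map_add, map_add, ha, hb]
  | smul r a _ ha => rw [← TensorProduct.smul_tmul', map_smul, map_smul, ha]

theorem span_tmul_top_s14 {sX : Set X} {sY : Set Y} (hX : Submodule.span k sX = ⊤)
    (hY : Submodule.span k sY = ⊤) :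
    Submodule.span k {t : X ⊗[k] Y | ∃ x ∈ sX, ∃ y ∈ sY, t = x ⊗ₜ[k] y} = ⊤ := by
  rw [eq_top_iff, ← TensorProduct.span_tmul_eq_top k X Y, Submodule.span_le]
  rintro t ⟨x, y, rfl⟩
  have hx : x ∈ Submodule.span k sX := hX ▸ Submodule.mem_top
  induction hx using Submodule.span_induction with
  | mem x hxs =>
    have hy : y ∈ Submodule.span k sY := hY ▸ Submodule.mem_top
    induction hy using Submodule.span_induction with
    | mem y hys => exact Submodule.subset_span ⟨x, hxs, y, hys, rfl⟩
    | zero => rw [TensorProduct.tmul_zero]; exact Submodule.zero_mem _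
    | add a b _ _ ha hb =>
      rw [TensorProduct.tmul_add]; exact Submodule.add_mem _ ha hb
    | smul r a _ ha =>
      rw [TensorProduct.tmul_smul]; exact Submodule.smul_mem _ _ ha
  | zero => rw [TensorProduct.zero_tmul]; exact Submodule.zero_mem _
  | add a b _ _ ha hb =>
    rw [TensorProduct.add_tmul]; exact Submodule.add_mem _ ha hb
  | smul r a _ ha =>
    rw [← TensorProduct.smul_tmul']; exact Submodule.smul_mem _ _ ha

theorem span_homog_top (C : ColorHopfAlg k G X) :
    Submodule.span k {x : X | ∃ g, x ∈ C.grade g} = ⊤ := by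
  rw [eq_top_iff, ← C.grade_top]
  apply iSup_le
  intro g
  exact fun x hx => Submodule.subset_span ⟨g, hx⟩

theorem phi_one_left (C : ColorHopfAlg k G X) (g : G) : C.φ 1 g = 1 := by
  have h := C.φ_mul_left 1 1 g
  rw [one_mul] at h
  have h2 : C.φ 1 g * 1 = C.φ 1 g * C.φ 1 g := by rw [mul_one, ← h]
  exact (mul_left_cancel₀ (C.φ_ne 1 g) h2).symm

theorem phi_one_right (C : ColorHopfAlg k G X) (g : G) : C.φ g 1 = 1 := by
  have h := C.φ_mul_right g 1 1
  rw [one_mul] at h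
  have h2 : C.φ g 1 * 1 = C.φ g 1 * C.φ g 1 := by rw [mul_one, ← h]
  exact (mul_left_cancel₀ (C.φ_ne g 1) h2).symm

end Infra
section LemmaK

variable {k G}
variable {B : Type*} [AddCommGroup B] [Module k B]

/-- braiding with `one` on the left is the flip. -/
theorem braid_one_left (C : ColorHopfAlg k G B) (y : B) :
    C.braid (C.one ⊗ₜ[k] y) = y ⊗ₜ[k] C.one := by
  have hmap : C.braid ∘ₗ TensorProduct.mk k B B C.one
      = (TensorProduct.mk k B B).flip C.one := by
    apply LinearMap.ext_on (span_homog_top C)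
    rintro y ⟨g, hy⟩
    simp only [LinearMap.comp_apply, TensorProduct.mk_apply, LinearMap.flip_apply]
    rw [C.braid_apply 1 g C.one y C.one_mem hy, phi_one_left, one_smul]
  exact LinearMap.congr_fun hmap y

noncomputable def Wmap (C : ColorHopfAlg k G B) : (B ⊗[k] B) ⊗[k] B →ₗ[k] B :=
  C.mul ∘ₗ
    (TensorProduct.map LinearMap.id
      (C.mul ∘ₗ (TensorProduct.map LinearMap.id C.antipode) ∘ₗ C.braid)) ∘ₗ
    (TensorProduct.assoc k B B B).toLinearMap

noncomputable def T0map (C : ColorHopfAlg k G B) :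
    (B ⊗[k] B) ⊗[k] B →ₗ[k] (B ⊗[k] B) ⊗[k] B :=
  (TensorProduct.assoc k B B B).symm.toLinearMap ∘ₗ
    (TensorProduct.map LinearMap.id C.braid) ∘ₗ (TensorProduct.assoc k B B B).toLinearMap

noncomputable def T1map (C : ColorHopfAlg k G B) :
    ((B ⊗[k] B) ⊗[k] B) ⊗[k] B →ₗ[k] ((B ⊗[k] B) ⊗[k] B) ⊗[k] B :=
  (TensorProduct.assoc k (B ⊗[k] B) B B).symm.toLinearMap ∘ₗ
    (TensorProduct.map LinearMap.id C.braid) ∘ₗ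
    (TensorProduct.assoc k (B ⊗[k] B) B B).toLinearMap

noncomputable def Kdmap (C : ColorHopfAlg k G B) : (B ⊗[k] B) ⊗[k] B →ₗ[k] B :=
  C.mul ∘ₗ (TensorProduct.map C.adj LinearMap.id) ∘ₗ T0map C

theorem K1 (C : ColorHopfAlg k G B) :
    Kdmap C = C.mul ∘ₗ (TensorProduct.map (Wmap C) LinearMap.id) ∘ₗ T1map C ∘ₗ
      (TensorProduct.map (TensorProduct.map C.comul LinearMap.id) LinearMap.id) := by
  apply TensorProduct.ext_threefold
  intro x z y
  simp only [Kdmap, T0map, T1map, LinearMap.comp_apply, TensorProduct.map_tmul,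
    LinearMap.id_apply, TensorProduct.assoc_tmul, LinearEquiv.coe_coe]
  induction C.braid (z ⊗ₜ[k] y) using TensorProduct.induction_on with
  | zero => simp
  | tmul p q =>
    simp [ColorHopfAlg.adj, Wmap, LinearMap.comp_apply, TensorProduct.map_tmul,
      TensorProduct.assoc_symm_tmul]
  | add s t hs ht => simp only [TensorProduct.tmul_add, map_add, hs, ht]

end LemmaK
section LemmaK2

variable {k G}
variable {B : Type*} [AddCommGroup B] [Module k B]

theorem K2 (C : ColorHopfAlg k G B) :
    C.mul ∘ₗ (TensorProduct.map (Wmap C) LinearMap.id) ∘ₗ T1map C ∘ₗ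
      (TensorProduct.map (TensorProduct.assoc k B B B).symm.toLinearMap LinearMap.id)
    = C.mul ∘ₗ
        (TensorProduct.map LinearMap.id
          (C.mul ∘ₗ C.braid ∘ₗ
            (TensorProduct.map (C.mul ∘ₗ (TensorProduct.map C.antipode LinearMap.id))
              LinearMap.id))) ∘ₗ
        (TensorProduct.assoc k B (B ⊗[k] B) B).toLinearMap := by
  have hs := span_homog_top C
  apply ext_span (span_tmul_top_s14 hs (span_tmul_top_s14 hs hs)) hs
  rintro t ⟨x, ⟨gx, hx⟩, u', ⟨u, ⟨gu, hu⟩, v, ⟨gv, hv⟩, rfl⟩, rfl⟩ y ⟨gy, hy⟩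
  simp only [LinearMap.comp_apply, TensorProduct.map_tmul, LinearMap.id_apply,
    LinearEquiv.coe_coe, TensorProduct.assoc_tmul, TensorProduct.assoc_symm_tmul,
    T1map, Wmap]
  rw [C.braid_apply gv gy v y hv hy,
    C.braid_apply (gu * gv) gy (C.mul (C.antipode u ⊗ₜ[k] v)) y
      (C.mul_mem gu gv _ _ (C.antipode_mem gu u hu) hv) hy]
  simp only [TensorProduct.tmul_smul, ← TensorProduct.smul_tmul', map_smul,
    smul_smul, LinearEquiv.coe_coe, TensorProduct.assoc_tmul,
    TensorProduct.assoc_symm_tmul, TensorProduct.map_tmul,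
    LinearMap.id_apply, LinearMap.comp_apply]
  rw [C.braid_apply gu gy u y hu hy]
  simp only [TensorProduct.tmul_smul, ← TensorProduct.smul_tmul', map_smul,
    smul_smul, TensorProduct.map_tmul, LinearMap.id_apply, LinearMap.comp_apply]
  rw [C.φ_mul_left, C.mul_assoc' x (C.mul (y ⊗ₜ[k] C.antipode u)) v,
    C.mul_assoc' y (C.antipode u) v, mul_comm (C.φ gv gy) (C.φ gu gy)]

theorem K3a (C : ColorHopfAlg k G B) :
    (TensorProduct.assoc k B (B ⊗[k] B) B).toLinearMap ∘ₗ
      (TensorProduct.map (TensorProduct.map LinearMap.id C.comul) LinearMap.id)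
    = (TensorProduct.map LinearMap.id (TensorProduct.map C.comul LinearMap.id)) ∘ₗ
        (TensorProduct.assoc k B B B).toLinearMap := by
  apply TensorProduct.ext_threefold
  intro x z y
  simp [TensorProduct.assoc_tmul]

theorem L5 (C : ColorHopfAlg k G B) :
    C.mul ∘ₗ (TensorProduct.map C.antipode LinearMap.id) ∘ₗ C.comul
      = C.counit.smulRight C.one := by
  ext x
  simp only [LinearMap.comp_apply, LinearMap.smulRight_apply]
  exact C.antipode_left x

theorem L6 (C : ColorHopfAlg k G B) :
    C.mul ∘ₗ C.braid ∘ₗ (TensorProduct.map (C.counit.smulRight C.one) LinearMap.id)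
      = (TensorProduct.lid k B).toLinearMap ∘ₗ (TensorProduct.map C.counit LinearMap.id) := by
  apply TensorProduct.ext'
  intro x y
  simp only [LinearMap.comp_apply, TensorProduct.map_tmul, LinearMap.id_apply,
    LinearMap.smulRight_apply, LinearEquiv.coe_coe, TensorProduct.lid_tmul]
  rw [← TensorProduct.smul_tmul', map_smul, braid_one_left, map_smul, C.mul_one' y]

theorem K4 (C : ColorHopfAlg k G B) :
    (TensorProduct.map LinearMap.id
        ((TensorProduct.lid k B).toLinearMap ∘ₗ (TensorProduct.map C.counit LinearMap.id))) ∘ₗ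
      (TensorProduct.assoc k B B B).toLinearMap
    = TensorProduct.map
        ((TensorProduct.rid k B).toLinearMap ∘ₗ (TensorProduct.map LinearMap.id C.counit))
        LinearMap.id := by
  apply TensorProduct.ext_threefold
  intro x z y
  simp [TensorProduct.assoc_tmul, TensorProduct.lid_tmul, TensorProduct.rid_tmul,
    TensorProduct.smul_tmul', TensorProduct.tmul_smul]

theorem coassoc_pt (C : ColorHopfAlg k G B) (a : B) :
    (TensorProduct.map C.comul LinearMap.id) (C.comul a)
      = (TensorProduct.assoc k B B B).symm
          ((TensorProduct.map LinearMap.id C.comul) (C.comul a)) := by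
  have h := LinearMap.congr_fun C.coassoc a
  simp only [LinearMap.comp_apply, LinearEquiv.coe_coe] at h
  rw [← h, LinearEquiv.symm_apply_apply]

theorem comp2 (C : ColorHopfAlg k G B) :
    (C.mul ∘ₗ C.braid ∘ₗ
        (TensorProduct.map (C.mul ∘ₗ (TensorProduct.map C.antipode LinearMap.id))
          LinearMap.id)) ∘ₗ (TensorProduct.map C.comul LinearMap.id)
      = (TensorProduct.lid k B).toLinearMap ∘ₗ (TensorProduct.map C.counit LinearMap.id) := by
  have h1 : (TensorProduct.map (C.mul ∘ₗ (TensorProduct.map C.antipode LinearMap.id))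
        (LinearMap.id (M := B))) ∘ₗ (TensorProduct.map C.comul LinearMap.id)
      = TensorProduct.map (C.counit.smulRight C.one) LinearMap.id := by
    rw [← TensorProduct.map_comp, LinearMap.id_comp, LinearMap.comp_assoc, L5]
  rw [LinearMap.comp_assoc, LinearMap.comp_assoc, h1, L6]

theorem lemmaK (C : ColorHopfAlg k G B) :
    Kdmap C ∘ₗ (TensorProduct.map C.comul LinearMap.id) = C.mul := by
  apply TensorProduct.ext'
  intro a y
  have e1 : (Kdmap C ∘ₗ (TensorProduct.map C.comul LinearMap.id)) (a ⊗ₜ[k] y)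
      = Kdmap C ((C.comul a) ⊗ₜ[k] y) := by
    simp [LinearMap.comp_apply]
  rw [e1, K1]
  simp only [LinearMap.comp_apply, TensorProduct.map_tmul, LinearMap.id_apply]
  rw [coassoc_pt]
  have e2 := LinearMap.congr_fun (K2 C)
    (((TensorProduct.map LinearMap.id C.comul) (C.comul a)) ⊗ₜ[k] y)
  simp only [LinearMap.comp_apply, TensorProduct.map_tmul, LinearMap.id_apply,
    LinearEquiv.coe_coe] at e2
  rw [e2]
  have e3 := LinearMap.congr_fun (K3a C) ((C.comul a) ⊗ₜ[k] y)
  simp only [LinearMap.comp_apply, TensorProduct.map_tmul, LinearMap.id_apply,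
    LinearEquiv.coe_coe] at e3
  rw [e3]
  have e35 : ∀ q : B ⊗[k] (B ⊗[k] B),
      (TensorProduct.map LinearMap.id
        (C.mul ∘ₗ C.braid ∘ₗ
          (TensorProduct.map (C.mul ∘ₗ (TensorProduct.map C.antipode LinearMap.id))
            LinearMap.id)))
        ((TensorProduct.map LinearMap.id (TensorProduct.map C.comul LinearMap.id)) q)
      = (TensorProduct.map LinearMap.id
          ((TensorProduct.lid k B).toLinearMap ∘ₗ
            (TensorProduct.map C.counit LinearMap.id))) q := by
    intro q
    rw [← LinearMap.comp_apply, ← TensorProduct.map_comp, LinearMap.id_comp, comp2]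
  rw [e35]
  have e5 := LinearMap.congr_fun (K4 C) ((C.comul a) ⊗ₜ[k] y)
  simp only [LinearMap.comp_apply, TensorProduct.map_tmul, LinearMap.id_apply,
    LinearEquiv.coe_coe] at e5
  rw [e5, C.counit_right a]

end LemmaK2
section CrossedLemmas

variable {k G}
variable {A H : Type*} [AddCommGroup A] [Module k A] [AddCommGroup H] [Module k H]
variable {CA : ColorHopfAlg k G A} {CH : ColorHopfAlg k G H}

/-- steps 3–7 of the smash multiplication (everything after inserting `Δ`). -/
noncomputable def smashMul' (M : ColorCrossedMod k G CA CH) :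
    ((H ⊗[k] (A ⊗[k] A)) ⊗[k] H) ⊗[k] A →ₗ[k] H ⊗[k] A :=
  (TensorProduct.map CH.mul CA.mul) ∘ₗ
  (TensorProduct.assoc k (H ⊗[k] H) A A).toLinearMap ∘ₗ
  (TensorProduct.map (TensorProduct.assoc k H H A).symm.toLinearMap LinearMap.id) ∘ₗ
  (TensorProduct.map
    (TensorProduct.map LinearMap.id (TensorProduct.map M.act LinearMap.id))
    LinearMap.id) ∘ₗ
  (TensorProduct.map
    ((TensorProduct.map LinearMap.id
        ((TensorProduct.assoc k A H A).symm.toLinearMap ∘ₗ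
          (TensorProduct.map LinearMap.id M.cAH) ∘ₗ
          (TensorProduct.assoc k A A H).toLinearMap)) ∘ₗ
      (TensorProduct.assoc k H (A ⊗[k] A) H).toLinearMap)
    LinearMap.id)

/-- the intermediate comparison map. -/
noncomputable def G2map (M : ColorCrossedMod k G CA CH) :
    ((H ⊗[k] (A ⊗[k] A)) ⊗[k] H) ⊗[k] A →ₗ[k] A :=
  CA.mul ∘ₗ
    (TensorProduct.map M.d
      (CA.mul ∘ₗ
        (TensorProduct.map (Kdmap CA ∘ₗ (TensorProduct.map LinearMap.id M.d))
          LinearMap.id))) ∘ₗ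
    (TensorProduct.map LinearMap.id (TensorProduct.assoc k (A ⊗[k] A) H A).symm.toLinearMap) ∘ₗ
    (TensorProduct.assoc k H (A ⊗[k] A) (H ⊗[k] A)).toLinearMap ∘ₗ
    (TensorProduct.assoc k (H ⊗[k] (A ⊗[k] A)) H A).toLinearMap

theorem HL1 (M : ColorCrossedMod k G CA CH) :
    (CA.mul ∘ₗ (TensorProduct.map M.d LinearMap.id)) ∘ₗ smashMul' M = G2map M := by
  have sA := span_homog_top CA
  have sH := span_homog_top CH
  have s0 := span_tmul_top_s14 (k := k) (X := A) (Y := A) sA sA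
  have s1 := span_tmul_top_s14 (k := k) (X := H) (Y := A ⊗[k] A) sH s0
  have s2 := span_tmul_top_s14 (k := k) (X := H ⊗[k] (A ⊗[k] A)) (Y := H) s1 sH
  refine @ext_span k _ ((H ⊗[k] (A ⊗[k] A)) ⊗[k] H) A A _ _ _ _ _ _ _ _ s2 sA _ _ ?_
  rintro t ⟨t1, ⟨h, ⟨gh, hh⟩, u', ⟨u, ⟨gu, hu⟩, v, ⟨gv, hv⟩, rfl⟩, rfl⟩, y, ⟨gy, hy⟩, rfl⟩
    b ⟨gb, hb⟩
  simp only [smashMul', G2map, Kdmap, T0map, LinearMap.comp_apply, TensorProduct.map_tmul,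
    LinearMap.id_apply, LinearEquiv.coe_coe, TensorProduct.assoc_tmul,
    TensorProduct.assoc_symm_tmul]
  rw [M.cAH_apply gv gy v y hv hy,
    CA.braid_apply gv gy v (M.d y) hv (M.d_hom.map_grade gy y hy)]
  simp only [TensorProduct.tmul_smul, ← TensorProduct.smul_tmul', map_smul,
    TensorProduct.map_tmul, LinearMap.id_apply, LinearMap.comp_apply,
    LinearEquiv.coe_coe, TensorProduct.assoc_tmul, TensorProduct.assoc_symm_tmul]
  congr 1
  rw [M.d_hom.map_mul h (M.act (u ⊗ₜ[k] y))]
  have hp := LinearMap.congr_fun M.peiffer₁ (u ⊗ₜ[k] y)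
  simp only [LinearMap.comp_apply, TensorProduct.map_tmul, LinearMap.id_apply] at hp
  rw [hp]
  rw [CA.mul_assoc' (M.d h) (CA.adj (u ⊗ₜ[k] M.d y)) (CA.mul (v ⊗ₜ[k] b)),
    ← CA.mul_assoc' (CA.adj (u ⊗ₜ[k] M.d y)) v b]

theorem HL4 (M : ColorCrossedMod k G CA CH) :
    (TensorProduct.map CA.mul CA.mul) ∘ₗ midMap k CA.braid ∘ₗ
      (TensorProduct.map (TensorProduct.map M.d M.d) LinearMap.id)
    = (TensorProduct.map (CA.mul ∘ₗ TensorProduct.map M.d LinearMap.id)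
        (CA.mul ∘ₗ TensorProduct.map M.d LinearMap.id)) ∘ₗ midMap k M.cHA := by
  have sA := span_homog_top CA
  have sH := span_homog_top CH
  have sHH := span_tmul_top_s14 (k := k) (X := H) (Y := H) sH sH
  have sAA := span_tmul_top_s14 (k := k) (X := A) (Y := A) sA sA
  refine @ext_span k _ (H ⊗[k] H) (A ⊗[k] A) (A ⊗[k] A) _ _ _ _ _ _
    _ _ sHH sAA _ _ ?_
  rintro t ⟨h1, ⟨g1, hh1⟩, h2, ⟨g2, hh2⟩, rfl⟩ u ⟨a1, ⟨ga1, ha1⟩, a2, ⟨ga2, ha2⟩, rfl⟩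
  simp only [midMap, LinearMap.comp_apply, TensorProduct.map_tmul, LinearMap.id_apply,
    LinearEquiv.coe_coe, TensorProduct.assoc_tmul, TensorProduct.assoc_symm_tmul]
  rw [M.cHA_apply g2 ga1 h2 a1 hh2 ha1,
    CA.braid_apply g2 ga1 (M.d h2) a1 (M.d_hom.map_grade g2 h2 hh2) ha1, M.φ_eq]
  simp only [TensorProduct.tmul_smul, ← TensorProduct.smul_tmul', map_smul,
    TensorProduct.map_tmul, LinearMap.id_apply, LinearMap.comp_apply,
    LinearEquiv.coe_coe, TensorProduct.assoc_tmul, TensorProduct.assoc_symm_tmul]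

end CrossedLemmas
/-- for a color Hopf crossed module `(A, H, d)`, the map
`p₁ : H ⋊ A → A, h ⊗ a ↦ d(h)a` is a morphism of color Hopf algebras; in particular it
is multiplicative for the smash product multiplication. -/
theorem p1_is_hopf_hom (CA : ColorHopfAlg k G A) (CH : ColorHopfAlg k G H)
    (M : ColorCrossedMod k G CA CH) :
    ((CA.mul ∘ₗ TensorProduct.map M.d LinearMap.id) (CH.one ⊗ₜ[k] CA.one) = CA.one) ∧
    (CA.counit ∘ₗ (CA.mul ∘ₗ TensorProduct.map M.d LinearMap.id) = M.smashCounit) ∧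
    ((CA.mul ∘ₗ TensorProduct.map M.d LinearMap.id) ∘ₗ M.smashMul =
      CA.mul ∘ₗ TensorProduct.map (CA.mul ∘ₗ TensorProduct.map M.d LinearMap.id)
        (CA.mul ∘ₗ TensorProduct.map M.d LinearMap.id)) ∧
    (CA.comul ∘ₗ (CA.mul ∘ₗ TensorProduct.map M.d LinearMap.id) =
      TensorProduct.map (CA.mul ∘ₗ TensorProduct.map M.d LinearMap.id)
        (CA.mul ∘ₗ TensorProduct.map M.d LinearMap.id) ∘ₗ M.smashComul) := by
  refine ⟨?_, ?_, ?_, ?_⟩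
  · simp only [LinearMap.comp_apply, TensorProduct.map_tmul, LinearMap.id_apply,
      M.d_hom.map_one]
    exact CA.mul_one' CA.one
  · apply TensorProduct.ext'
    intro h a
    simp only [LinearMap.comp_apply, TensorProduct.map_tmul, LinearMap.id_apply,
      ColorCrossedMod.smashCounit, LinearEquiv.coe_coe, TensorProduct.lid_tmul]
    rw [CA.counit_mul (M.d h) a]
    have hc := LinearMap.congr_fun M.d_hom.map_counit h
    simp only [LinearMap.comp_apply] at hc
    rw [hc, smul_eq_mul]
  · apply TensorProduct.ext_fourfold'
    intro h a y b
    simp only [LinearMap.comp_apply]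
    have e0 : M.smashMul ((h ⊗ₜ[k] a) ⊗ₜ[k] (y ⊗ₜ[k] b))
        = smashMul' M (((h ⊗ₜ[k] CA.comul a) ⊗ₜ[k] y) ⊗ₜ[k] b) := by
      simp only [ColorCrossedMod.smashMul, smashMul', LinearMap.comp_apply,
        TensorProduct.map_tmul, LinearMap.id_apply, LinearEquiv.coe_coe,
        TensorProduct.assoc_symm_tmul]
    rw [e0]
    have e1 := LinearMap.congr_fun (HL1 M) (((h ⊗ₜ[k] CA.comul a) ⊗ₜ[k] y) ⊗ₜ[k] b)
    simp only [LinearMap.comp_apply] at e1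
    rw [e1]
    simp only [G2map, LinearMap.comp_apply, TensorProduct.map_tmul, LinearMap.id_apply,
      LinearEquiv.coe_coe, TensorProduct.assoc_tmul, TensorProduct.assoc_symm_tmul]
    have e2 := LinearMap.congr_fun (lemmaK CA) (a ⊗ₜ[k] M.d y)
    simp only [LinearMap.comp_apply, TensorProduct.map_tmul, LinearMap.id_apply] at e2
    rw [e2, CA.mul_assoc' (M.d h) a (CA.mul (M.d y ⊗ₜ[k] b)),
      ← CA.mul_assoc' a (M.d y) b]
  · apply LinearMap.ext
    intro w
    simp only [LinearMap.comp_apply]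
    have e1 := LinearMap.congr_fun CA.comul_mul ((TensorProduct.map M.d LinearMap.id) w)
    simp only [LinearMap.comp_apply] at e1
    rw [e1]
    have e2 : (TensorProduct.map CA.comul CA.comul) ((TensorProduct.map M.d LinearMap.id) w)
        = (TensorProduct.map (TensorProduct.map M.d M.d) LinearMap.id)
            ((TensorProduct.map CH.comul CA.comul) w) := by
      rw [← LinearMap.comp_apply, ← TensorProduct.map_comp, ← LinearMap.comp_apply,
        ← TensorProduct.map_comp, M.d_hom.map_comul, LinearMap.comp_id,
        LinearMap.id_comp]
    rw [e2]
    have e3 := LinearMap.congr_fun (HL4 M) ((TensorProduct.map CH.comul CA.comul) w)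
    simp only [LinearMap.comp_apply] at e3
    rw [e3]
    simp only [ColorCrossedMod.smashComul, LinearMap.comp_apply]

end Statements

end ColorHopfPaper
end
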